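/- arXiv:2212.07216 — 9 statements merged into one kernel-verified Lean document; each statement's English description precedes it below -/
import Mathlib

section
/- Let X be a Hausdorff topological space equipped with a CW-complex structure, let A and B be C*-algebras, and let π : B → A be a surjective *-homomorphism. Then every f ∈ C_b(X;A) admits a preimage g ∈ C_b(X;B) with π ∘ g = f such that for every subcomplex E of X one has sup_{x∈E} ‖g(x)‖ = sup_{x∈E} ‖f(x)‖ (in particular ‖g‖ = ‖f‖, taking E = X). -/
/-- A CW-complex structure on a subset `C` of a topological space `X`, following the
"classical" definition of CW-complexes in Mathlib (`Topology.CWComplex.Classical`):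
the cells are given by characteristic maps from closed unit balls in euclidean spaces. -/
class Topology.CWComplexLegacy {X : Type*} [TopologicalSpace X] (C : Set X) where
  /-- The indexing type of the `n`-cells. -/
  cell (n : ℕ) : Type*
  /-- The characteristic map of the `n`-cells. -/
  map (n : ℕ) (i : cell n) : PartialEquiv (Fin n → ℝ) X
  source_eq (n : ℕ) (i : cell n) : (map n i).source = Metric.ball 0 1
  continuousOn (n : ℕ) (i : cell n) : ContinuousOn (map n i) (Metric.closedBall 0 1)
  continuousOn_symm (n : ℕ) (i : cell n) : ContinuousOn (map n i).symm (map n i).target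
  pairwiseDisjoint' :
    (Set.univ : Set (Σ n, cell n)).PairwiseDisjoint
      (fun ni => map ni.1 ni.2 '' Metric.ball 0 1)
  mapsTo (n : ℕ) (i : cell n) : ∃ I : Π m, Finset (cell m),
    Set.MapsTo (map n i) (Metric.sphere 0 1)
      (⋃ (m : ℕ) (_ : m < n) (j ∈ I m), map m j '' Metric.closedBall 0 1)
  closed' (A : Set X) (hA : A ⊆ C) :
    (∀ n (j : cell n), IsClosed (A ∩ map n j '' Metric.closedBall 0 1)) → IsClosed A
  union' : ⋃ (n : ℕ) (j : cell n), map n j '' Metric.closedBall 0 1 = C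

/-- A subcomplex of a CW-complex, following `Topology.RelCWComplex.Subcomplex` in Mathlib:
a closed subset which is a union of (open) cells of the CW-complex. -/
structure Topology.CWComplexLegacy.Subcomplex {X : Type*} [TopologicalSpace X] (C : Set X)
    [Topology.CWComplexLegacy C] where
  /-- The underlying set of the subcomplex. -/
  carrier : Set X
  /-- The indexing sets of the cells of the subcomplex. -/
  I : Π n, Set (Topology.CWComplexLegacy.cell (C := C) n)
  closed' : IsClosed carrier
  union' :
    ⋃ (n : ℕ) (j : I n), Topology.CWComplexLegacy.map (C := C) n j '' Metric.ball 0 1 = carrier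


/-! ### Auxiliary machinery for lifting bounded continuous functions along surjective
morphisms of C⋆-algebras.

The proof does not actually use the CW-structure: we construct a continuous
(generally non-linear) section of `π` by a Bartle–Graves-type argument, and correct the norm
pointwise using the continuous functional calculus, obtaining a lift `g` with
`‖g x‖ = ‖f x‖` for *every* point `x`. -/

open scoped CStarAlgebra
open Filter Topology Metric Set

namespace CbLift

variable {A B : Type*} [NonUnitalCStarAlgebra A] [NonUnitalCStarAlgebra B]

lemma quasispectrum_subset (b : B) :
    quasispectrum ℝ (star b * b) ⊆ Set.Icc 0 (‖b‖ * ‖b‖) := by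
  intro t ht
  rw [Unitization.quasispectrum_eq_spectrum_inr' ℝ ℂ] at ht
  have h1 : ((star b * b : B) : Unitization ℂ B)
      = star (b : Unitization ℂ B) * (b : Unitization ℂ B) := by simp
  constructor
  · rw [h1] at ht
    exact spectrum_star_mul_self_nonneg t ht
  · have := spectrum.norm_le_norm_of_mem (𝕜 := ℝ) ht
    rw [Unitization.norm_inr, CStarRing.norm_star_mul_self] at this
    exact (Real.norm_eq_abs t ▸ le_abs_self t).trans this

/-- `d ^ (k+1)` in a non-unital algebra. -/
noncomputable def npow (d : B) : ℕ → B
  | 0 => d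
  | (k+1) => d * npow d k

lemma cfcₙ_monomial (d : B) (hd : IsSelfAdjoint d) (k : ℕ) :
    cfcₙ (fun t : ℝ => t^(k+1)) d = npow d k := by
  induction k with
  | zero => simpa [npow] using cfcₙ_id' ℝ d
  | succ n ih =>
    have h : (fun t : ℝ => t^(n+1+1)) = fun t : ℝ => t * t^(n+1) := by ext t; ring
    rw [h, cfcₙ_mul (f := fun t : ℝ => t) (g := fun t : ℝ => t^(n+1)) (a := d)
        (by fun_prop) rfl (by fun_prop) (by simp), cfcₙ_id' ℝ d, ih, npow]

lemma cfcₙ_polyeval (d : B) (hd : IsSelfAdjoint d) (c : ℕ → ℝ) (n : ℕ) :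
    cfcₙ (fun t : ℝ => ∑ k ∈ Finset.range n, c k * t^(k+1)) d
      = ∑ k ∈ Finset.range n, c k • npow d k := by
  induction n with
  | zero => simp [cfcₙ_zero ℝ d]
  | succ m ih =>
    simp only [Finset.sum_range_succ]
    rw [cfcₙ_add (f := fun t : ℝ => ∑ k ∈ Finset.range m, c k * t^(k+1))
        (g := fun t : ℝ => c m * t^(m+1)) (a := d)
        (by fun_prop) (by simp) (by fun_prop) (by simp), ih]
    congr 1
    rw [← cfcₙ_monomial d hd m]
    exact cfcₙ_const_mul (c m) _ d (by fun_prop) (by simp)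

lemma continuous_npow (k : ℕ) : Continuous fun b : B => npow (star b * b) k := by
  induction k with
  | zero => exact continuous_star.mul continuous_id
  | succ n ih => exact (continuous_star.mul continuous_id).mul ih

lemma exists_poly_approx (f : ℝ → ℝ) (hf : Continuous f) (h0 : f 0 = 0)
    (R ε : ℝ) (hR : 0 ≤ R) (hε : 0 < ε) :
    ∃ (c : ℕ → ℝ) (n : ℕ), ∀ t ∈ Set.Icc 0 R,
      |f t - ∑ k ∈ Finset.range n, c k * t^(k+1)| ≤ ε := by
  obtain ⟨p, hp⟩ := exists_polynomial_near_of_continuousOn 0 R f hf.continuousOn (ε/2)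
    (by positivity)
  set q := p - Polynomial.C (p.eval 0) with hq
  refine ⟨fun k => q.coeff (k+1), q.natDegree, ?_⟩
  have hqe : ∀ t : ℝ, q.eval t
      = ∑ k ∈ Finset.range q.natDegree, q.coeff (k+1) * t^(k+1) := by
    intro t
    rw [Polynomial.eval_eq_sum_range, Finset.sum_range_succ']
    simp [hq, Polynomial.coeff_zero_eq_eval_zero]
  intro t ht
  rw [← hqe]
  have h1 := hp t ht
  have h2 := hp 0 ⟨le_refl 0, hR⟩
  rw [h0, sub_zero] at h2
  have hqt : q.eval t = p.eval t - p.eval 0 := by simp [hq]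
  rw [hqt]
  have habs : |f t - (p.eval t - p.eval 0)| ≤ |p.eval t - f t| + |p.eval 0| := by
    have : f t - (p.eval t - p.eval 0) = -(p.eval t - f t) + p.eval 0 := by ring
    rw [this]
    exact (abs_add_le _ _).trans (by rw [abs_neg])
  linarith


lemma continuous_mul_cfcₙ (f : ℝ → ℝ) (hf : Continuous f) (h0 : f 0 = 0) :
    Continuous fun b : B => b * cfcₙ f (star b * b) := by
  rw [continuous_iff_continuousAt]
  intro b₀
  rw [Metric.continuousAt_iff]
  intro ε hε
  set R : ℝ := ‖b₀‖ + 1 with hRdef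
  have hR : 0 < R := by positivity
  set ε' : ℝ := ε / (3 * (R + 1)) with hε'def
  have hε' : 0 < ε' := by positivity
  obtain ⟨c, n, hcn⟩ := exists_poly_approx f hf h0 (R * R) ε' (by positivity) hε'
  set P : ℝ → ℝ := fun t => ∑ k ∈ Finset.range n, c k * t^(k+1) with hPdef
  have hPc : Continuous P := by fun_prop
  have hP0 : P 0 = 0 := by simp [hPdef]
  set G : B → B := fun b => b * ∑ k ∈ Finset.range n, c k • npow (star b * b) k with hGdef
  have hGc : Continuous G := by
    apply continuous_id.mul
    exact continuous_finset_sum _ fun k _ => (continuous_npow k).const_smul (c k)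
  have key : ∀ b' : B, ‖b'‖ ≤ R → ‖b' * cfcₙ f (star b' * b') - G b'‖ ≤ R * ε' := by
    intro b' hb'
    have hd : IsSelfAdjoint (star b' * b') := .star_mul_self b'
    have hGP : G b' = b' * cfcₙ P (star b' * b') := by
      rw [hGdef]; simp only []; rw [cfcₙ_polyeval _ hd]
    have hsub : cfcₙ (fun t => f t - P t) (star b' * b')
        = cfcₙ f (star b' * b') - cfcₙ P (star b' * b') :=
      cfcₙ_sub (f := f) (g := P) (a := star b' * b')
        hf.continuousOn h0 hPc.continuousOn hP0
    rw [hGP, ← mul_sub, ← hsub]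
    calc ‖b' * cfcₙ (fun t => f t - P t) (star b' * b')‖
        ≤ ‖b'‖ * ‖cfcₙ (fun t => f t - P t) (star b' * b')‖ := norm_mul_le _ _
      _ ≤ R * ε' := by
          apply mul_le_mul hb' ?_ (norm_nonneg _) hR.le
          apply norm_cfcₙ_le
          intro x hx
          have hxι := quasispectrum_subset b' hx
          have hxR : x ∈ Set.Icc 0 (R * R) := by
            refine ⟨hxι.1, hxι.2.trans ?_⟩
            exact mul_le_mul hb' hb' (norm_nonneg _) hR.le
          simpa [Real.norm_eq_abs] using hcn x hxR
  obtain ⟨δ₁, hδ₁, hδG⟩ := Metric.continuousAt_iff.mp hGc.continuousAt (ε/3) (by positivity)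
  refine ⟨min δ₁ 1, lt_min hδ₁ one_pos, fun {b} hb => ?_⟩
  have hb1 : dist b b₀ < δ₁ := lt_of_lt_of_le hb (min_le_left _ _)
  have hb2 : ‖b‖ ≤ R := by
    have hble : dist b b₀ < 1 := lt_of_lt_of_le hb (min_le_right _ _)
    rw [dist_eq_norm] at hble
    calc ‖b‖ = ‖b₀ + (b - b₀)‖ := by rw [add_sub_cancel]
      _ ≤ ‖b₀‖ + ‖b - b₀‖ := norm_add_le _ _
      _ ≤ R := by rw [hRdef]; linarith
  have hb0R : ‖b₀‖ ≤ R := by rw [hRdef]; linarith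
  have hGd := hδG hb1
  rw [dist_eq_norm] at *
  have hRε' : R * ε' ≤ ε / 3 := by
    have h1 : R / (R + 1) ≤ 1 := by
      rw [div_le_one (by positivity)]; linarith
    have h2 : R * ε' = (ε / 3) * (R / (R + 1)) := by
      rw [hε'def]; field_simp
    calc R * ε' = (ε / 3) * (R / (R + 1)) := h2
      _ ≤ (ε / 3) * 1 := mul_le_mul_of_nonneg_left h1 (by positivity)
      _ = ε / 3 := mul_one _
  calc ‖b * cfcₙ f (star b * b) - b₀ * cfcₙ f (star b₀ * b₀)‖
      ≤ ‖b * cfcₙ f (star b * b) - G b‖ + ‖G b - G b₀‖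
        + ‖G b₀ - b₀ * cfcₙ f (star b₀ * b₀)‖ := by
        have := norm_add₃_le (a := b * cfcₙ f (star b * b) - G b) (b := G b - G b₀)
          (c := G b₀ - b₀ * cfcₙ f (star b₀ * b₀))
        simpa using this
    _ < ε := by
        have k1 := key b hb2
        have k2 := key b₀ hb0R
        rw [norm_sub_rev] at k2
        clear_value R ε' P G
        linarith


/-- The scalar truncation profile. -/
noncomputable def hfun (α t : ℝ) : ℝ := max (Real.sqrt t - α) 0 / Real.sqrt t

lemma hfun_eq_zero {α t : ℝ} (h : Real.sqrt t ≤ α) : hfun α t = 0 := by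
  unfold hfun
  rw [max_eq_right (by linarith), zero_div]

lemma hfun_zero (α : ℝ) (hα : 0 ≤ α) : hfun α 0 = 0 :=
  hfun_eq_zero (by simpa using hα)

lemma continuous_hfun {α : ℝ} (hα : 0 < α) : Continuous (hfun α) := by
  rw [continuous_iff_continuousAt]
  intro t₀
  rcases lt_or_ge t₀ (α * α) with h | h
  · have hev : ∀ᶠ t in 𝓝 t₀, hfun α t = 0 := by
      have : IsOpen {t : ℝ | t < α * α} := isOpen_lt continuous_id continuous_const
      filter_upwards [this.mem_nhds h] with t ht
      apply hfun_eq_zero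
      rcases le_or_gt t 0 with h' | h'
      · rw [Real.sqrt_eq_zero_of_nonpos h']; exact hα.le
      · rw [show α = Real.sqrt (α * α) by rw [Real.sqrt_mul_self hα.le]]
        exact Real.sqrt_le_sqrt (le_of_lt ht)
    have : ContinuousAt (fun _ : ℝ => (0 : ℝ)) t₀ := continuousAt_const
    apply this.congr
    filter_upwards [hev] with t ht using ht.symm
  · have ht₀ : 0 < t₀ := lt_of_lt_of_le (by positivity) h
    have hs : Real.sqrt t₀ ≠ 0 := by positivity
    exact ((Real.continuous_sqrt.sub continuous_const).max continuous_const).continuousAt.div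
      Real.continuous_sqrt.continuousAt hs

lemma hfun_key {α t : ℝ} (hα : 0 < α) (ht : 0 ≤ t) :
    0 ≤ t * (1 - hfun α t)^2 ∧ t * (1 - hfun α t)^2 ≤ α^2 := by
  rcases le_or_gt (Real.sqrt t) α with h | h
  · rw [hfun_eq_zero h]
    constructor
    · simpa using ht
    · have := Real.sq_sqrt ht
      nlinarith [Real.sqrt_nonneg t]
  · have hs : 0 < Real.sqrt t := lt_trans hα h
    unfold hfun
    rw [max_eq_left (by linarith)]
    have h1 : 1 - (Real.sqrt t - α) / Real.sqrt t = α / Real.sqrt t := by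
      field_simp; ring
    have htpos : 0 < t := Real.sqrt_pos.mp hs
    rw [h1, div_pow, Real.sq_sqrt ht]
    constructor
    · positivity
    · rw [mul_comm, div_mul_cancel₀ _ htpos.ne']

lemma hfun_lip {α β t : ℝ} (hα : 0 < α) (hβ : 0 < β) :
    |hfun α t - hfun β t| ≤ |α - β| / min α β := by
  have hm : 0 < min α β := lt_min hα hβ
  rcases le_or_gt (Real.sqrt t) (min α β) with h | h
  · rw [hfun_eq_zero (h.trans (min_le_left _ _)), hfun_eq_zero (h.trans (min_le_right _ _))]
    simp only [sub_zero, abs_zero]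
    positivity
  · have hs : 0 < Real.sqrt t := lt_trans hm h
    unfold hfun
    rw [div_sub_div_same, abs_div, abs_of_pos hs]
    have h1 : |max (Real.sqrt t - α) 0 - max (Real.sqrt t - β) 0| ≤ |α - β| := by
      have := abs_max_sub_max_le_abs (Real.sqrt t - α) (Real.sqrt t - β) 0
      calc |max (Real.sqrt t - α) 0 - max (Real.sqrt t - β) 0| ≤ |Real.sqrt t - α - (Real.sqrt t - β)| := this
        _ = |α - β| := by rw [show Real.sqrt t - α - (Real.sqrt t - β) = -(α - β) by ring, abs_neg]
    calc |max (Real.sqrt t - α) 0 - max (Real.sqrt t - β) 0| / Real.sqrt t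
        ≤ |α - β| / Real.sqrt t := by gcongr
      _ ≤ |α - β| / min α β := by
          rw [div_le_div_iff₀ hs hm]
          exact mul_le_mul_of_nonneg_left h.le (abs_nonneg _)


/-- Truncation of `b` to norm at most `α`. -/
noncomputable def trunc (α : ℝ) (b : B) : B := b - b * cfcₙ (hfun α) (star b * b)

lemma trunc_norm_le {α : ℝ} (hα : 0 < α) (b : B) : ‖trunc α b‖ ≤ α := by
  set d : B := star b * b with hd_def
  have hd : IsSelfAdjoint d := .star_mul_self b
  set c : B := cfcₙ (hfun α) d with hc_def
  have hc : IsSelfAdjoint c := cfcₙ_predicate _ d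
  set T : B := trunc α b with hT_def
  have hTb : T = b - b * c := rfl
  have halg : star T * T = (d - d * c) - (c * d - c * (d * c)) := by
    rw [hTb, star_sub, star_mul, hc.star_eq, hd_def]
    noncomm_ring
  have hcont : Continuous (hfun α) := continuous_hfun hα
  have h0 : hfun α 0 = 0 := hfun_zero α hα.le
  have e1 : cfcₙ (fun t : ℝ => t * hfun α t) d = d * c := by
    rw [cfcₙ_mul (f := fun t : ℝ => t) (g := hfun α) (a := d)
      (by fun_prop) rfl hcont.continuousOn h0, cfcₙ_id' ℝ d]
  have e2 : cfcₙ (fun t : ℝ => hfun α t * (t * hfun α t)) d = c * (d * c) := by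
    rw [cfcₙ_mul (f := hfun α) (g := fun t => t * hfun α t) (a := d)
      hcont.continuousOn h0 (by fun_prop) (by simp [h0]), e1]
  have e3 : cfcₙ (fun t : ℝ => hfun α t * t) d = c * d := by
    rw [cfcₙ_mul (f := hfun α) (g := fun t : ℝ => t) (a := d)
      hcont.continuousOn h0 (by fun_prop) rfl, cfcₙ_id' ℝ d]
  have e4 : cfcₙ (fun t : ℝ => t - t * hfun α t) d = d - d * c := by
    rw [cfcₙ_sub (f := fun t : ℝ => t) (g := fun t => t * hfun α t) (a := d)
      (by fun_prop) rfl (by fun_prop) (by simp [h0]), cfcₙ_id' ℝ d, e1]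
  have e5 : cfcₙ (fun t : ℝ => hfun α t * t - hfun α t * (t * hfun α t)) d
      = c * d - c * (d * c) := by
    rw [cfcₙ_sub (f := fun t : ℝ => hfun α t * t)
      (g := fun t => hfun α t * (t * hfun α t)) (a := d)
      (by fun_prop) (by simp [h0]) (by fun_prop) (by simp [h0]), e2, e3]
  have e6 : cfcₙ (fun t : ℝ => (t - t * hfun α t) - (hfun α t * t - hfun α t * (t * hfun α t))) d
      = star T * T := by
    rw [cfcₙ_sub (f := fun t : ℝ => t - t * hfun α t)
      (g := fun t => hfun α t * t - hfun α t * (t * hfun α t)) (a := d)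
      (by fun_prop) (by simp [h0]) (by fun_prop) (by simp [h0]), e4, e5, halg]
  have hnorm : ‖star T * T‖ ≤ α^2 := by
    rw [← e6]
    apply norm_cfcₙ_le
    intro x hx
    have hmem := quasispectrum_subset b hx
    have hkey := hfun_key hα hmem.1
    have : (x - x * hfun α x) - (hfun α x * x - hfun α x * (x * hfun α x))
        = x * (1 - hfun α x)^2 := by ring
    rw [this, Real.norm_eq_abs, abs_of_nonneg hkey.1]
    exact hkey.2
  have hsq : ‖T‖ * ‖T‖ ≤ α^2 := by
    rw [← CStarRing.norm_star_mul_self]; exact hnorm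
  nlinarith [norm_nonneg T, hα]

lemma cfcₙ_hfun_eq_zero {α : ℝ} (hα : 0 < α) (a : A) (h : ‖a‖ ≤ α) :
    cfcₙ (hfun α) (star a * a) = 0 := by
  have : cfcₙ (hfun α) (star a * a) = cfcₙ (0 : ℝ → ℝ) (star a * a) := by
    apply cfcₙ_congr
    intro x hx
    have hmem := quasispectrum_subset a hx
    have hx2 : x ≤ α * α := hmem.2.trans (mul_le_mul h h (norm_nonneg _) hα.le)
    have : Real.sqrt x ≤ α := by
      rw [show α = Real.sqrt (α * α) by rw [Real.sqrt_mul_self hα.le]]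
      exact Real.sqrt_le_sqrt hx2
    simpa using hfun_eq_zero this
  rw [this, cfcₙ_zero]

lemma trunc_eq_self {α : ℝ} (hα : 0 < α) (a : A) (h : ‖a‖ ≤ α) : trunc α a = a := by
  rw [trunc, cfcₙ_hfun_eq_zero hα a h, mul_zero, sub_zero]

lemma trunc_map (π : B →⋆ₙₐ[ℂ] A) {α : ℝ} (hα : 0 < α) (b : B) :
    π (trunc α b) = trunc α (π b) := by
  have hd : IsSelfAdjoint (star b * b) := .star_mul_self b
  have hcs : CompactSpace (quasispectrum ℝ (star b * b)) := by infer_instance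
  rw [trunc, map_sub, map_mul, trunc]
  congr 1
  rw [NonUnitalStarAlgHom.map_cfcₙ π (hfun α) (star b * b)
    (continuous_hfun hα).continuousOn (hfun_zero α hα.le) (map_continuous π) hd
    (hd.map π)]
  congr 1
  rw [map_mul, map_star]

lemma continuousAt_trunc {α₀ : ℝ} (hα₀ : 0 < α₀) (b₀ : B) :
    ContinuousAt (fun p : ℝ × B => trunc p.1 p.2) (α₀, b₀) := by
  have htrunc_cont : Continuous (trunc α₀ : B → B) :=
    continuous_id.sub (continuous_mul_cfcₙ (hfun α₀) (continuous_hfun hα₀)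
      (hfun_zero α₀ hα₀.le))
  rw [ContinuousAt, ← tendsto_sub_nhds_zero_iff]
  set g : ℝ × B → ℝ := fun p =>
    ‖p.2‖ * (|p.1 - α₀| / min p.1 α₀) + ‖trunc α₀ p.2 - trunc α₀ b₀‖ with hg_def
  have hgt : Tendsto g (𝓝 (α₀, b₀)) (𝓝 0) := by
    have c1 : ContinuousAt g (α₀, b₀) := by
      apply ContinuousAt.add
      · apply ContinuousAt.mul
        · exact (continuous_norm.comp continuous_snd).continuousAt
        · apply ContinuousAt.div
          · exact (continuous_abs.comp (continuous_fst.sub continuous_const)).continuousAt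
          · exact (continuous_fst.min continuous_const).continuousAt
          · simp [hα₀.ne']
      · exact (continuous_norm.comp
          ((htrunc_cont.comp continuous_snd).sub continuous_const)).continuousAt
    have hg0 : g (α₀, b₀) = 0 := by simp [hg_def]
    simpa [hg0] using c1.tendsto
  apply squeeze_zero_norm' ?_ hgt
  have hev : ∀ᶠ p : ℝ × B in 𝓝 (α₀, b₀), α₀ / 2 < p.1 := by
    have : IsOpen {p : ℝ × B | α₀ / 2 < p.1} := isOpen_lt continuous_const continuous_fst
    exact this.mem_nhds (by simpa using by linarith)
  filter_upwards [hev] with p hp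
  obtain ⟨α, b⟩ := p
  simp only at hp ⊢
  have hα : 0 < α := lt_trans (by linarith) hp
  have hd : IsSelfAdjoint (star b * b) := .star_mul_self b
  have key1 : ‖trunc α b - trunc α₀ b‖ ≤ ‖b‖ * (|α - α₀| / min α α₀) := by
    have hdiff : trunc α b - trunc α₀ b
        = b * cfcₙ (fun t => hfun α₀ t - hfun α t) (star b * b) := by
      rw [cfcₙ_sub (f := hfun α₀) (g := hfun α) (a := star b * b)
        (continuous_hfun hα₀).continuousOn (hfun_zero α₀ hα₀.le)
        (continuous_hfun hα).continuousOn (hfun_zero α hα.le)]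
      rw [trunc, trunc, mul_sub]
      abel
    rw [hdiff]
    calc ‖b * cfcₙ (fun t => hfun α₀ t - hfun α t) (star b * b)‖
        ≤ ‖b‖ * ‖cfcₙ (fun t => hfun α₀ t - hfun α t) (star b * b)‖ := norm_mul_le _ _
      _ ≤ ‖b‖ * (|α - α₀| / min α α₀) := by
          apply mul_le_mul_of_nonneg_left ?_ (norm_nonneg b)
          apply norm_cfcₙ_le
          intro x _
          rw [Real.norm_eq_abs]
          calc |hfun α₀ x - hfun α x| ≤ |α₀ - α| / min α₀ α := hfun_lip hα₀ hα
            _ = |α - α₀| / min α α₀ := by rw [abs_sub_comm, min_comm]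
  calc ‖trunc α b - trunc α₀ b₀‖
      = ‖(trunc α b - trunc α₀ b) + (trunc α₀ b - trunc α₀ b₀)‖ := by
        rw [sub_add_sub_cancel]
    _ ≤ ‖trunc α b - trunc α₀ b‖ + ‖trunc α₀ b - trunc α₀ b₀‖ := norm_add_le _ _
    _ ≤ g (α, b) := by
        rw [hg_def]
        exact add_le_add_left key1 _


/-- `π` as a continuous linear map. -/
noncomputable def πL (π : B →⋆ₙₐ[ℂ] A) : B →L[ℂ] A :=
  LinearMap.mkContinuous
    { toFun := π
      map_add' := map_add π
      map_smul' := map_smul π } 1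
    (fun b => by simpa using NonUnitalStarAlgHom.norm_apply_le π b)

lemma πL_apply (π : B →⋆ₙₐ[ℂ] A) (b : B) : πL π b = π b := rfl

/-- Approximate continuous lifts with uniform error. -/
lemma exists_approx_section (π : B →⋆ₙₐ[ℂ] A)
    {C : ℝ} (hC : 0 < C) (hCl : ∀ a : A, ∃ b : B, π b = a ∧ ‖b‖ ≤ C * ‖a‖)
    {ε : ℝ} (hε : 0 < ε) :
    ∃ w : A → B, Continuous w ∧ (∀ a, ‖π (w a) - a‖ ≤ ε) ∧
      (∀ a, ‖w a‖ ≤ C * ‖a‖ + C * ε) := by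
  choose lift hlift hliftn using hCl
  obtain ⟨ρ, hρ⟩ := PartitionOfUnity.exists_isSubordinate (ι := A) (X := A)
    isClosed_univ (fun c => Metric.ball c ε) (fun c => isOpen_ball)
    (fun x _ => mem_iUnion.2 ⟨x, mem_ball_self hε⟩)
  have hmem : ∀ a : A, ∀ c ∈ ρ.finsupport a, dist a c < ε := by
    intro a c hc
    rw [PartitionOfUnity.mem_finsupport] at hc
    have h1 : a ∈ tsupport (ρ c) := subset_closure hc
    exact mem_ball.mp (hρ c h1)
  have hw_eq : ∀ a : A, (∑ᶠ c, ρ c a • lift c) = ∑ c ∈ ρ.finsupport a, ρ c a • lift c := by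
    intro a
    apply finsum_eq_sum_of_support_subset
    intro c hc
    have hne : ρ c a ≠ 0 := by
      intro h
      apply Function.mem_support.mp hc
      simp [h]
    rwa [Finset.mem_coe, PartitionOfUnity.mem_finsupport, Function.mem_support]
  refine ⟨fun a => ∑ᶠ c, ρ c a • lift c, ?_, ?_, ?_⟩
  · apply ρ.continuous_finsum_smul (g := fun c _ => lift c)
    exact fun i x _ => continuousAt_const
  · intro a
    show ‖π (∑ᶠ c, ρ c a • lift c) - a‖ ≤ ε
    rw [hw_eq a, map_sum]
    have hsum1 : ∑ c ∈ ρ.finsupport a, ρ c a = 1 := ρ.sum_finsupport (mem_univ a)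
    have hπs : ∀ c, π (ρ c a • lift c) = ρ c a • c := by
      intro c
      rw [← Complex.coe_smul, map_smul, Complex.coe_smul, hlift]
    simp_rw [hπs]
    have ha : a = ∑ c ∈ ρ.finsupport a, ρ c a • a := by
      rw [← Finset.sum_smul, hsum1, one_smul]
    calc ‖(∑ c ∈ ρ.finsupport a, ρ c a • c) - a‖
        = ‖∑ c ∈ ρ.finsupport a, ρ c a • (c - a)‖ := by
          rw [eq_comm]; congr 1
          rw [show (∑ c ∈ ρ.finsupport a, ρ c a • c) - a
              = ∑ c ∈ ρ.finsupport a, ρ c a • c - ∑ c ∈ ρ.finsupport a, ρ c a • a by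
            rw [← ha], ← Finset.sum_sub_distrib]
          simp_rw [← smul_sub]
      _ ≤ ∑ c ∈ ρ.finsupport a, ‖ρ c a • (c - a)‖ := norm_sum_le _ _
      _ ≤ ∑ c ∈ ρ.finsupport a, ρ c a * ε := by
          apply Finset.sum_le_sum
          intro c hc
          rw [norm_smul, Real.norm_eq_abs, abs_of_nonneg (ρ.nonneg c a)]
          apply mul_le_mul_of_nonneg_left ?_ (ρ.nonneg c a)
          rw [← dist_eq_norm, dist_comm]
          exact (hmem a c hc).le
      _ = ε := by rw [← Finset.sum_mul, hsum1, one_mul]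
  · intro a
    show ‖∑ᶠ c, ρ c a • lift c‖ ≤ C * ‖a‖ + C * ε
    rw [hw_eq a]
    have hsum1 : ∑ c ∈ ρ.finsupport a, ρ c a = 1 := ρ.sum_finsupport (mem_univ a)
    calc ‖∑ c ∈ ρ.finsupport a, ρ c a • lift c‖
        ≤ ∑ c ∈ ρ.finsupport a, ‖ρ c a • lift c‖ := norm_sum_le _ _
      _ ≤ ∑ c ∈ ρ.finsupport a, ρ c a * (C * (‖a‖ + ε)) := by
          apply Finset.sum_le_sum
          intro c hc
          rw [norm_smul, Real.norm_eq_abs, abs_of_nonneg (ρ.nonneg c a)]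
          apply mul_le_mul_of_nonneg_left ?_ (ρ.nonneg c a)
          refine (hliftn c).trans ?_
          apply mul_le_mul_of_nonneg_left ?_ hC.le
          calc ‖c‖ ≤ ‖a‖ + ‖c - a‖ := by
                simpa using norm_add_le a (c - a)
            _ ≤ ‖a‖ + ε := by
                gcongr
                rw [← dist_eq_norm, dist_comm]
                exact (hmem a c hc).le
      _ = C * ‖a‖ + C * ε := by rw [← Finset.sum_mul, hsum1, one_mul]; ring

/-- A continuous global section of a surjective morphism. -/
lemma exists_section (π : B →⋆ₙₐ[ℂ] A) (hπ : Function.Surjective π) :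
    ∃ s : A → B, Continuous s ∧ ∀ a, π (s a) = a := by
  obtain ⟨C, hC, hCl⟩ := ContinuousLinearMap.exists_preimage_norm_le (πL π)
    (show Function.Surjective (πL π) from hπ)
  have happrox : ∀ n : ℕ, ∃ w : A → B, Continuous w ∧
      (∀ a, ‖π (w a) - a‖ ≤ (1/2)^n) ∧
      (∀ a, ‖w a‖ ≤ C * ‖a‖ + C * (1/2)^n) :=
    fun n => exists_approx_section π hC hCl (by positivity)
  choose w hwc hwa hwb using happrox
  set r : ℕ → A → A := fun n => Nat.rec (motive := fun _ => A → A) id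
    (fun n rn a => rn a - π (w n (rn a))) n with hr_def
  have hrs : ∀ n a, r (n+1) a = r n a - π (w n (r n a)) := fun n a => rfl
  have hrc : ∀ n, Continuous (r n) := by
    intro n
    induction n with
    | zero => exact continuous_id
    | succ m ih => exact ih.sub ((map_continuous π).comp ((hwc m).comp ih))
  have hrb : ∀ n a, ‖r (n+1) a‖ ≤ (1/2)^n := by
    intro n a
    rw [hrs, norm_sub_rev]
    exact hwa n (r n a)
  set v : ℕ → A → B := fun n a => w n (r n a) with hv_def
  have hπv : ∀ n a, π (v n a) = r n a - r (n+1) a := by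
    intro n a
    rw [hrs]
    abel
  have hvb : ∀ n a, ‖v (n+1) a‖ ≤ 2 * C * (1/2)^n := by
    intro n a
    calc ‖v (n+1) a‖ ≤ C * ‖r (n+1) a‖ + C * (1/2)^(n+1) := hwb (n+1) (r (n+1) a)
      _ ≤ C * (1/2)^n + C * (1/2)^(n+1) := by
          gcongr
          exact hrb n a
      _ ≤ 2 * C * (1/2)^n := by
          rw [pow_succ]
          nlinarith [pow_pos (by norm_num : (0:ℝ) < 1/2) n, hC]
  have hsumgeom : Summable (fun n : ℕ => 2 * C * (1/2)^n) :=
    (summable_geometric_of_lt_one (by norm_num) (by norm_num)).mul_left _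
  refine ⟨fun a => v 0 a + ∑' n, v (n+1) a, ?_, ?_⟩
  · apply Continuous.add
    · exact (hwc 0).comp (hrc 0)
    · exact continuous_tsum (fun n => (hwc (n+1)).comp (hrc (n+1))) hsumgeom
        (fun n x => hvb n x)
  · intro a
    have hsummable : Summable fun n => v (n+1) a :=
      Summable.of_norm_bounded hsumgeom (fun n => hvb n a)
    have htsum : π (∑' n, v (n+1) a) = ∑' n, π (v (n+1) a) := by
      have := (πL π).map_tsum hsummable
      simpa [πL_apply] using this
    have hhs : HasSum (fun n => π (v (n+1) a)) (r 1 a) := by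
      have hsn : Summable fun n => ‖π (v (n+1) a)‖ := by
        apply Summable.of_nonneg_of_le (fun n => norm_nonneg _) ?_ hsumgeom
        intro n
        exact (NonUnitalStarAlgHom.norm_apply_le π _).trans (hvb n a)
      rw [hasSum_iff_tendsto_nat_of_summable_norm hsn]
      have hps : ∀ n : ℕ, ∑ i ∈ Finset.range n, π (v (i+1) a) = r 1 a - r (n+1) a := by
        intro n
        calc ∑ i ∈ Finset.range n, π (v (i+1) a)
            = ∑ i ∈ Finset.range n, ((fun k => r (k+1) a) i - (fun k => r (k+1) a) (i+1)) := by
              apply Finset.sum_congr rfl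
              intro i _
              exact hπv (i+1) a
          _ = r 1 a - r (n+1) a := Finset.sum_range_sub' _ n
      simp_rw [hps]
      have : Tendsto (fun n : ℕ => r (n+1) a) atTop (𝓝 0) := by
        apply squeeze_zero_norm (fun n => hrb n a)
        exact tendsto_pow_atTop_nhds_zero_of_lt_one (by norm_num) (by norm_num)
      simpa using tendsto_const_nhds.sub this
    rw [map_add, htsum, hhs.tsum_eq]
    have h0 : π (v 0 a) = r 0 a - r 1 a := hπv 0 a
    rw [h0]
    have : r 0 a = a := rfl
    rw [← this]
    abel


lemma exists_pointwise_lift {X : Type*} [TopologicalSpace X] (π : B →⋆ₙₐ[ℂ] A)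
    (hπ : Function.Surjective π) (f : X → A) (hf : Continuous f) :
    ∃ g : X → B, Continuous g ∧ (∀ x, π (g x) = f x) ∧ (∀ x, ‖g x‖ = ‖f x‖) := by
  classical
  obtain ⟨s, hsc, hs⟩ := exists_section π hπ
  set g : X → B := fun x => if f x = 0 then 0 else trunc ‖f x‖ (s (f x)) with hg_def
  have hgle : ∀ x, ‖g x‖ ≤ ‖f x‖ := by
    intro x
    simp only [hg_def]
    split_ifs with h
    · simp
    · exact trunc_norm_le (norm_pos_iff.mpr h) _
  have hgπ : ∀ x, π (g x) = f x := by
    intro x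
    simp only [hg_def]
    split_ifs with h
    · simp [h]
    · rw [trunc_map π (norm_pos_iff.mpr h), hs]
      exact trunc_eq_self (norm_pos_iff.mpr h) _ le_rfl
  have hgeq : ∀ x, ‖g x‖ = ‖f x‖ := by
    intro x
    refine le_antisymm (hgle x) ?_
    calc ‖f x‖ = ‖π (g x)‖ := by rw [hgπ x]
      _ ≤ ‖g x‖ := NonUnitalStarAlgHom.norm_apply_le π _
  refine ⟨g, ?_, hgπ, hgeq⟩
  rw [continuous_iff_continuousAt]
  intro x
  by_cases hx : f x = 0
  · have hgx : g x = 0 := by simp only [hg_def]; simp [hx]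
    rw [ContinuousAt, hgx]
    apply squeeze_zero_norm hgle
    have : Tendsto (fun y => ‖f y‖) (𝓝 x) (𝓝 ‖f x‖) := (hf.norm).continuousAt
    rwa [hx, norm_zero] at this
  · have hopen : IsOpen {y : X | f y ≠ 0} := isOpen_compl_singleton.preimage hf
    have hmem : x ∈ {y : X | f y ≠ 0} := hx
    have hev : g =ᶠ[𝓝 x] fun y => trunc ‖f y‖ (s (f y)) := by
      filter_upwards [hopen.mem_nhds hmem] with y hy
      simp only [hg_def]
      simp [hy]
    have hC : ContinuousAt (fun y => trunc ‖f y‖ (s (f y))) x := by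
      have h1 : ContinuousAt (fun p : ℝ × B => trunc p.1 p.2) (‖f x‖, s (f x)) :=
        continuousAt_trunc (norm_pos_iff.mpr hx) _
      have h2 : ContinuousAt (fun y => ((‖f y‖ : ℝ), s (f y))) x :=
        ((hf.norm).continuousAt).prodMk ((hsc.comp hf).continuousAt)
      exact ContinuousAt.comp (x := x) (g := fun p : ℝ × B => trunc p.1 p.2)
        (f := fun y => ((‖f y‖ : ℝ), s (f y))) h1 h2
    exact hC.congr hev.symm


end CbLift


theorem cb_map_surjective_of_cwcomplex_norm_on_subcomplexes
    {X : Type*} [TopologicalSpace X] [T2Space X] [Topology.CWComplexLegacy (Set.univ : Set X)]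
    {A B : Type*} [NonUnitalCStarAlgebra A] [NonUnitalCStarAlgebra B]
    (π : B →⋆ₙₐ[ℂ] A) (hπ : Function.Surjective π) :
    ∀ f : BoundedContinuousFunction X A, ∃ g : BoundedContinuousFunction X B,
      (∀ x : X, π (g x) = f x) ∧
      (∀ E : Topology.CWComplexLegacy.Subcomplex (Set.univ : Set X),
        (⨆ x : E.carrier, ‖g x‖) = ⨆ x : E.carrier, ‖f x‖) ∧
      ‖g‖ = ‖f‖ := by
  intro f
  obtain ⟨g0, hgc, hgπ, hgn⟩ := CbLift.exists_pointwise_lift π hπ f f.continuous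
  set g : BoundedContinuousFunction X B :=
    BoundedContinuousFunction.ofNormedAddCommGroup g0 hgc ‖f‖
      (fun x => (hgn x).le.trans (f.norm_coe_le_norm x)) with hg_def
  have hgapp : ∀ x, g x = g0 x := fun x => rfl
  refine ⟨g, fun x => by rw [hgapp, hgπ], ?_, ?_⟩
  · intro E
    exact iSup_congr fun x => by rw [hgapp, hgn]
  · rw [BoundedContinuousFunction.norm_eq_iSup_norm, BoundedContinuousFunction.norm_eq_iSup_norm]
    exact iSup_congr fun x => by rw [hgapp, hgn]
end

section
/- Let B be a C*-algebra, J ⊆ B a closed *-subalgebra with b·j − j·b ∈ J for all b ∈ B, j ∈ J, and G a group acting on B by *-automorphisms ρ(g) with ρ(g)(J) = J. Let (u_i)_{i∈ι} be a quasicentral approximate unit for J in B, i.e. a net indexed by a nonempty directed preorder ι with u_i ∈ J, 0 ≤ u_i, ‖u_i‖ ≤ 1, ‖u_i·j − j‖ → 0 for every j ∈ J, ‖u_i·b − b·u_i‖ → 0 for every b ∈ B, and ‖ρ(g)(u_i) − u_i‖ → 0 for every g ∈ G (limits along atTop). Let f : ℝ → ℝ be continuous with f(0) = 0 and write f(u_i)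 for the non-unital continuous functional calculus cfcₙ f (u_i) applied to the positive contraction u_i. Then: (a) for every g ∈ G, ‖ρ(g)(f(u_i)) − f(u_i)‖ → 0 along atTop; (b) for every b ∈ B, ‖f(u_i)·b − b·f(u_i)‖ → 0 along atTop. -/
open Filter Polynomial Finset
open scoped NNReal

section Aux

variable {B : Type*} [NonUnitalCStarAlgebra B] [PartialOrder B] [StarOrderedRing B]

/-- `mpow a k = a ^ (k + 1)` in a non-unital ring. -/
private def mpow (a : B) : ℕ → B
  | 0 => a
  | k + 1 => a * mpow a k

private lemma aux_mpow_norm {a : B} (ha : ‖a‖ ≤ 1) : ∀ k : ℕ, ‖mpow a k‖ ≤ 1 := by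
  intro k
  induction k with
  | zero => exact ha
  | succ k ih =>
    calc ‖mpow a (k + 1)‖ = ‖a * mpow a k‖ := rfl
      _ ≤ ‖a‖ * ‖mpow a k‖ := norm_mul_le _ _
      _ ≤ 1 * 1 := mul_le_mul ha ih (norm_nonneg _) zero_le_one
      _ = 1 := one_mul 1

private lemma aux_pow_diff (a b : B) (ha : ‖a‖ ≤ 1) (hb : ‖b‖ ≤ 1) :
    ∀ k : ℕ, ‖mpow a k - mpow b k‖ ≤ (k + 1 : ℝ) * ‖a - b‖ := by
  intro k
  induction k with
  | zero => simpa [mpow] using le_of_eq (one_mul ‖a - b‖).symm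
  | succ k ih =>
    have key : mpow a (k + 1) - mpow b (k + 1)
        = a * (mpow a k - mpow b k) + (a - b) * mpow b k := by
      show a * mpow a k - b * mpow b k = _
      simp only [mul_sub, sub_mul]
      abel
    calc ‖mpow a (k + 1) - mpow b (k + 1)‖
        ≤ ‖a * (mpow a k - mpow b k)‖ + ‖(a - b) * mpow b k‖ := key ▸ norm_add_le _ _
      _ ≤ ‖a‖ * ‖mpow a k - mpow b k‖ + ‖a - b‖ * ‖mpow b k‖ :=
          add_le_add (norm_mul_le _ _) (norm_mul_le _ _)
      _ ≤ 1 * ((k + 1 : ℝ) * ‖a - b‖) + ‖a - b‖ * 1 :=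
          add_le_add (mul_le_mul ha ih (norm_nonneg _) zero_le_one)
            (mul_le_mul_of_nonneg_left (aux_mpow_norm hb k) (norm_nonneg _))
      _ = ((k : ℝ) + 1 + 1) * ‖a - b‖ := by ring
      _ = ((k + 1 : ℕ) + 1 : ℝ) * ‖a - b‖ := by push_cast; ring

private lemma aux_pow_comm (a c : B) (ha : ‖a‖ ≤ 1) :
    ∀ k : ℕ, ‖mpow a k * c - c * mpow a k‖ ≤ (k + 1 : ℝ) * ‖a * c - c * a‖ := by
  intro k
  induction k with
  | zero => simpa [mpow] using le_of_eq (one_mul ‖a * c - c * a‖).symm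
  | succ k ih =>
    have key : mpow a (k + 1) * c - c * mpow a (k + 1)
        = a * (mpow a k * c - c * mpow a k) + (a * c - c * a) * mpow a k := by
      show (a * mpow a k) * c - c * (a * mpow a k) = _
      simp only [mul_sub, sub_mul, mul_assoc]
      abel
    calc ‖mpow a (k + 1) * c - c * mpow a (k + 1)‖
        ≤ ‖a * (mpow a k * c - c * mpow a k)‖ + ‖(a * c - c * a) * mpow a k‖ :=
          key ▸ norm_add_le _ _
      _ ≤ ‖a‖ * ‖mpow a k * c - c * mpow a k‖ + ‖a * c - c * a‖ * ‖mpow a k‖ :=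
          add_le_add (norm_mul_le _ _) (norm_mul_le _ _)
      _ ≤ 1 * ((k + 1 : ℝ) * ‖a * c - c * a‖) + ‖a * c - c * a‖ * 1 :=
          add_le_add (mul_le_mul ha ih (norm_nonneg _) zero_le_one)
            (mul_le_mul_of_nonneg_left (aux_mpow_norm ha k) (norm_nonneg _))
      _ = ((k : ℝ) + 1 + 1) * ‖a * c - c * a‖ := by ring
      _ = ((k + 1 : ℕ) + 1 : ℝ) * ‖a * c - c * a‖ := by push_cast; ring

private lemma aux_cfcn_pow (a : B) (ha : IsSelfAdjoint a) :
    ∀ k : ℕ, cfcₙ (fun x : ℝ => x ^ (k + 1)) a = mpow a k := by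
  intro k
  induction k with
  | zero => simpa [mpow] using cfcₙ_id' ℝ a
  | succ k ih =>
    have h : (fun x : ℝ => x ^ (k + 1 + 1)) = fun x : ℝ => x * x ^ (k + 1) := by
      funext x; ring
    rw [h, cfcₙ_mul (fun x : ℝ => x) (fun x : ℝ => x ^ (k + 1)) a, cfcₙ_id' ℝ a, ih]
    rfl

private lemma aux_cfcn_poly (q : ℝ[X]) (a : B) (ha : IsSelfAdjoint a) :
    cfcₙ (fun x : ℝ => x * q.eval x) a
      = ∑ k ∈ Finset.range (q.natDegree + 1), q.coeff k • mpow a k := by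
  have h1 : (fun x : ℝ => x * q.eval x)
      = ∑ k ∈ Finset.range (q.natDegree + 1), (fun x : ℝ => q.coeff k * x ^ (k + 1)) := by
    funext x
    simp only [Finset.sum_apply]
    rw [eval_eq_sum_range, Finset.mul_sum]
    exact Finset.sum_congr rfl fun k _ => by ring
  rw [h1, cfcₙ_sum _ a _ (fun i _ => by fun_prop) (fun i _ => by simp)]
  refine Finset.sum_congr rfl fun k _ => ?_
  rw [cfcₙ_const_mul (q.coeff k) _ a, aux_cfcn_pow a ha k]

private lemma aux_qspec {a : B} (ha : 0 ≤ a) (hn : ‖a‖ ≤ 1) :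
    quasispectrum ℝ a ⊆ Set.Icc (0 : ℝ) 1 := by
  intro x hx
  refine ⟨quasispectrum_nonneg_of_nonneg a ha x hx, ?_⟩
  have h1 : ∀ y ∈ quasispectrum ℝ≥0 a, y ≤ (1 : ℝ≥0) := fun y hy =>
    (CStarAlgebra.le_nnnorm_of_mem_quasispectrum hy).trans (by exact_mod_cast hn)
  have h2 := (QuasispectrumRestricts.le_nnreal_iff
    (QuasispectrumRestricts.nnreal_of_nonneg ha) (r := 1)).mp h1 x hx
  simpa using h2

private lemma aux_close {a : B} (ha : 0 ≤ a) (hn : ‖a‖ ≤ 1) {f g : ℝ → ℝ}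
    (hf : Continuous f) (hg : Continuous g) (hf0 : f 0 = 0) (hg0 : g 0 = 0)
    {δ : ℝ} (h : ∀ x ∈ Set.Icc (0 : ℝ) 1, |f x - g x| ≤ δ) :
    ‖cfcₙ f a - cfcₙ g a‖ ≤ δ := by
  rw [← cfcₙ_sub f g a hf.continuousOn hf0 hg.continuousOn hg0]
  exact norm_cfcₙ_le fun x hx => by
    rw [Real.norm_eq_abs]; exact h x (aux_qspec ha hn hx)

private lemma aux_S_diff (q : ℝ[X]) {a b : B} (ha : ‖a‖ ≤ 1) (hb : ‖b‖ ≤ 1) :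
    ‖(∑ k ∈ Finset.range (q.natDegree + 1), q.coeff k • mpow a k)
      - (∑ k ∈ Finset.range (q.natDegree + 1), q.coeff k • mpow b k)‖
    ≤ (∑ k ∈ Finset.range (q.natDegree + 1), |q.coeff k| * (k + 1)) * ‖a - b‖ := by
  rw [← Finset.sum_sub_distrib]
  simp_rw [← smul_sub]
  refine (norm_sum_le _ _).trans ?_
  rw [Finset.sum_mul]
  refine Finset.sum_le_sum fun k _ => ?_
  rw [norm_smul, Real.norm_eq_abs, mul_assoc]
  exact mul_le_mul_of_nonneg_left (aux_pow_diff a b ha hb k) (abs_nonneg _)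

private lemma aux_S_comm (q : ℝ[X]) {a : B} (c : B) (ha : ‖a‖ ≤ 1) :
    ‖(∑ k ∈ Finset.range (q.natDegree + 1), q.coeff k • mpow a k) * c
      - c * (∑ k ∈ Finset.range (q.natDegree + 1), q.coeff k • mpow a k)‖
    ≤ (∑ k ∈ Finset.range (q.natDegree + 1), |q.coeff k| * (k + 1)) * ‖a * c - c * a‖ := by
  rw [Finset.sum_mul, Finset.mul_sum, ← Finset.sum_sub_distrib]
  simp_rw [smul_mul_assoc, mul_smul_comm, ← smul_sub]
  refine (norm_sum_le _ _).trans ?_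
  rw [Finset.sum_mul]
  refine Finset.sum_le_sum fun k _ => ?_
  rw [norm_smul, Real.norm_eq_abs, mul_assoc]
  exact mul_le_mul_of_nonneg_left (aux_pow_comm a c ha k) (abs_nonneg _)

private lemma aux_poly (f : ℝ → ℝ) (hf : Continuous f) (hf0 : f 0 = 0) {δ : ℝ} (hδ : 0 < δ) :
    ∃ q : ℝ[X], ∀ x ∈ Set.Icc (0 : ℝ) 1, |x * q.eval x - f x| ≤ δ := by
  obtain ⟨p, hp⟩ := exists_polynomial_near_of_continuousOn 0 1 f hf.continuousOn (δ / 2)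
    (by positivity)
  refine ⟨p.divX, fun x hx => ?_⟩
  have h0 : |p.coeff 0| < δ / 2 := by
    have := hp 0 ⟨le_refl 0, zero_le_one⟩
    simpa [hf0, coeff_zero_eq_eval_zero] using this
  have hx' := hp x hx
  have key : x * p.divX.eval x = p.eval x - p.coeff 0 := by
    conv_rhs => rw [← p.divX_mul_X_add]
    simp [mul_comm x]
  rw [key]
  have t : |p.eval x - p.coeff 0 - f x| ≤ |p.eval x - f x| + |p.coeff 0| := by
    have h : p.eval x - p.coeff 0 - f x = (p.eval x - f x) - p.coeff 0 := by ring
    rw [h]; exact abs_sub _ _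
  linarith

end Aux

/-- continuous functions of a quasicentral approximate unit are asymptotically
invariant and asymptotically central. -/
theorem quasicentral_approximate_unit_cfc
    {B : Type*} [NonUnitalCStarAlgebra B] [PartialOrder B] [StarOrderedRing B]
    (J : NonUnitalStarSubalgebra ℂ B) (hJclosed : IsClosed (J : Set B))
    (hJcomm : ∀ b : B, ∀ j ∈ J, b * j - j * b ∈ J)
    {G : Type*} [Group G] (ρ : G → (B ≃⋆ₐ[ℂ] B))
    (hρone : ∀ x : B, ρ 1 x = x)
    (hρmul : ∀ g h : G, ∀ x : B, ρ (g * h) x = ρ g (ρ h x))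
    (hρJ : ∀ g : G, ρ g '' (J : Set B) = J)
    {ι : Type*} [Preorder ι] [IsDirected ι (· ≤ ·)] [Nonempty ι]
    (u : ι → B)
    (hmem : ∀ i, u i ∈ J) (hpos : ∀ i, 0 ≤ u i) (hnorm : ∀ i, ‖u i‖ ≤ 1)
    (happrox : ∀ j ∈ J,
      Filter.Tendsto (fun i => ‖u i * j - j‖) Filter.atTop (nhds 0))
    (hcomm : ∀ b : B,
      Filter.Tendsto (fun i => ‖u i * b - b * u i‖) Filter.atTop (nhds 0))
    (hequiv : ∀ g : G,
      Filter.Tendsto (fun i => ‖ρ g (u i) - u i‖) Filter.atTop (nhds 0))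
    (f : ℝ → ℝ) (hf : Continuous f) (hf0 : f 0 = 0) :
    (∀ g : G, Filter.Tendsto
      (fun i => ‖ρ g (cfcₙ f (u i)) - cfcₙ f (u i)‖) Filter.atTop (nhds 0)) ∧
    (∀ b : B, Filter.Tendsto
      (fun i => ‖cfcₙ f (u i) * b - b * cfcₙ f (u i)‖) Filter.atTop (nhds 0)) := by
  have hsa : ∀ i, IsSelfAdjoint (u i) := fun i => IsSelfAdjoint.of_nonneg (hpos i)
  constructor
  · intro g
    rw [Metric.tendsto_nhds]
    intro ε hε
    obtain ⟨q, hq⟩ := aux_poly f hf hf0 (δ := ε / 4) (by positivity)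
    set C : ℝ := ∑ k ∈ Finset.range (q.natDegree + 1), |q.coeff k| * (k + 1) with hC
    have hC0 : 0 ≤ C := Finset.sum_nonneg fun k _ => by positivity
    have hev : ∀ᶠ i in atTop, ‖ρ g (u i) - u i‖ < ε / (4 * (C + 1)) :=
      (hequiv g).eventually (eventually_lt_nhds (by positivity))
    filter_upwards [hev] with i hi
    rw [Real.dist_eq, sub_zero, abs_of_nonneg (norm_nonneg _)]
    set a := u i with hadef
    have ha : 0 ≤ a := hpos i
    have han : ‖a‖ ≤ 1 := hnorm i
    set v := ρ g a with hv
    have hvn : ‖v‖ ≤ 1 := by rw [hv, StarAlgEquiv.norm_map]; exact han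
    have hvsa : IsSelfAdjoint v := by
      rw [IsSelfAdjoint, hv, ← map_star]
      exact congrArg _ (hsa i)
    have hv0 : 0 ≤ v := by
      rw [StarOrderedRing.nonneg_iff_quasispectrum_nonneg (R := ℝ) v hvsa]
      intro x hx
      exact quasispectrum_nonneg_of_nonneg a ha x
        (NonUnitalAlgHom.quasispectrum_apply_subset' ℂ (ρ g) a hx)
    have hmap : ρ g (cfcₙ f a) = cfcₙ f v :=
      NonUnitalStarAlgHomClass.map_cfcₙ (ρ g) f a hf.continuousOn hf0
        (StarAlgEquiv.isometry (ρ g)).continuous (hsa i) hvsa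
    set gq : ℝ → ℝ := fun x : ℝ => x * q.eval x with hgq
    have hgqc : Continuous gq := by fun_prop
    have hgq0 : gq 0 = 0 := by simp [hgq]
    have h1 : ‖cfcₙ f v - cfcₙ gq v‖ ≤ ε / 4 :=
      aux_close hv0 hvn hf hgqc hf0 hgq0 fun x hx => by
        rw [abs_sub_comm]; exact hq x hx
    have h3 : ‖cfcₙ gq a - cfcₙ f a‖ ≤ ε / 4 :=
      aux_close ha han hgqc hf hgq0 hf0 hq
    have h2 : ‖cfcₙ gq v - cfcₙ gq a‖ < ε / 4 := by
      rw [hgq, aux_cfcn_poly q v hvsa, aux_cfcn_poly q a (hsa i)]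
      calc ‖(∑ k ∈ Finset.range (q.natDegree + 1), q.coeff k • mpow v k)
          - (∑ k ∈ Finset.range (q.natDegree + 1), q.coeff k • mpow a k)‖
          ≤ C * ‖v - a‖ := aux_S_diff q hvn han
        _ ≤ (C + 1) * ‖v - a‖ := by nlinarith [norm_nonneg (v - a)]
        _ < (C + 1) * (ε / (4 * (C + 1))) := by
            exact mul_lt_mul_of_pos_left hi (by positivity)
        _ = ε / 4 := by field_simp
    calc ‖ρ g (cfcₙ f a) - cfcₙ f a‖
        = ‖(cfcₙ f v - cfcₙ gq v) + (cfcₙ gq v - cfcₙ gq a) + (cfcₙ gq a - cfcₙ f a)‖ := by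
          rw [hmap]; congr 1; abel
      _ ≤ ‖cfcₙ f v - cfcₙ gq v‖ + ‖cfcₙ gq v - cfcₙ gq a‖ + ‖cfcₙ gq a - cfcₙ f a‖ :=
          norm_add₃_le
      _ < ε := by linarith
  · intro c
    rw [Metric.tendsto_nhds]
    intro ε hε
    obtain ⟨q, hq⟩ := aux_poly f hf hf0 (δ := ε / (4 * (‖c‖ + 1))) (by positivity)
    set C : ℝ := ∑ k ∈ Finset.range (q.natDegree + 1), |q.coeff k| * (k + 1) with hC
    have hC0 : 0 ≤ C := Finset.sum_nonneg fun k _ => by positivity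
    have hev : ∀ᶠ i in atTop, ‖u i * c - c * u i‖ < ε / (4 * (C + 1)) :=
      (hcomm c).eventually (eventually_lt_nhds (by positivity))
    filter_upwards [hev] with i hi
    rw [Real.dist_eq, sub_zero, abs_of_nonneg (norm_nonneg _)]
    set a := u i with hadef
    have ha : 0 ≤ a := hpos i
    have han : ‖a‖ ≤ 1 := hnorm i
    set gq : ℝ → ℝ := fun x : ℝ => x * q.eval x with hgq
    have hgqc : Continuous gq := by fun_prop
    have hgq0 : gq 0 = 0 := by simp [hgq]
    set P : B := ∑ k ∈ Finset.range (q.natDegree + 1), q.coeff k • mpow a k with hP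
    have hPe : cfcₙ gq a = P := aux_cfcn_poly q a (hsa i)
    have hd : ‖cfcₙ f a - P‖ ≤ ε / (4 * (‖c‖ + 1)) := by
      rw [← hPe]
      exact aux_close ha han hf hgqc hf0 hgq0 fun x hx => by
        rw [abs_sub_comm]; exact hq x hx
    have hdc : ε / (4 * (‖c‖ + 1)) * ‖c‖ ≤ ε / 4 := by
      rw [div_mul_eq_mul_div, div_le_div_iff₀ (by positivity) (by positivity)]
      nlinarith [norm_nonneg c]
    have h1 : ‖(cfcₙ f a - P) * c‖ ≤ ε / 4 :=
      (norm_mul_le _ _).trans <| le_trans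
        (mul_le_mul_of_nonneg_right hd (norm_nonneg c)) hdc
    have h3 : ‖c * (P - cfcₙ f a)‖ ≤ ε / 4 := by
      refine (norm_mul_le _ _).trans ?_
      rw [norm_sub_rev]
      calc ‖c‖ * ‖cfcₙ f a - P‖ ≤ ‖c‖ * (ε / (4 * (‖c‖ + 1))) :=
            mul_le_mul_of_nonneg_left hd (norm_nonneg c)
        _ = ε / (4 * (‖c‖ + 1)) * ‖c‖ := by ring
        _ ≤ ε / 4 := hdc
    have h2 : ‖P * c - c * P‖ < ε / 4 := by
      calc ‖P * c - c * P‖ ≤ C * ‖a * c - c * a‖ := aux_S_comm q c han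
        _ ≤ (C + 1) * ‖a * c - c * a‖ := by nlinarith [norm_nonneg (a * c - c * a)]
        _ < (C + 1) * (ε / (4 * (C + 1))) := mul_lt_mul_of_pos_left hi (by positivity)
        _ = ε / 4 := by field_simp
    calc ‖cfcₙ f a * c - c * cfcₙ f a‖
        = ‖(cfcₙ f a - P) * c + (P * c - c * P) + c * (P - cfcₙ f a)‖ := by
          congr 1; noncomm_ring
      _ ≤ ‖(cfcₙ f a - P) * c‖ + ‖P * c - c * P‖ + ‖c * (P - cfcₙ f a)‖ := norm_add₃_le
      _ < ε := by linarith
end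

section
/- Let B be a C*-algebra, J ⊆ B a closed *-subalgebra with b·j − j·b ∈ J for all b ∈ B, j ∈ J, and let (u_i)_{i∈ι} be a quasicentral approximate unit for J in B, i.e. a net indexed by a nonempty directed preorder ι with u_i ∈ J, 0 ≤ u_i, ‖u_i‖ ≤ 1, ‖u_i·j − j‖ → 0 for every j ∈ J and ‖u_i·b − b·u_i‖ → 0 for every b ∈ B (limits along atTop). Let f : ℝ → ℝ be continuous with f(0) = 0 and f(1) = 0, and write f(u_i) for the non-unital continuous functional calculus cfcₙ f (u_i). Then for every j ∈ J, ‖f(u_i)·j‖ → 0 along atTop. -/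
open Filter

/-- if `f` vanishes at `0` and `1`, then `f` of a quasicentral approximate unit
for `J` annihilates `J` asymptotically. -/
theorem quasicentral_approximate_unit_cfc_mul_tendsto_zero
    {B : Type*} [NonUnitalCStarAlgebra B] [PartialOrder B] [StarOrderedRing B]
    (J : NonUnitalStarSubalgebra ℂ B) (hJclosed : IsClosed (J : Set B))
    (hJcomm : ∀ b : B, ∀ j ∈ J, b * j - j * b ∈ J)
    {ι : Type*} [Preorder ι] [IsDirected ι (· ≤ ·)] [Nonempty ι]
    (u : ι → B)
    (hmem : ∀ i, u i ∈ J) (hpos : ∀ i, 0 ≤ u i) (hnorm : ∀ i, ‖u i‖ ≤ 1)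
    (happrox : ∀ j ∈ J,
      Filter.Tendsto (fun i => ‖u i * j - j‖) Filter.atTop (nhds 0))
    (hcomm : ∀ b : B,
      Filter.Tendsto (fun i => ‖u i * b - b * u i‖) Filter.atTop (nhds 0))
    (f : ℝ → ℝ) (hf : Continuous f) (hf0 : f 0 = 0) (hf1 : f 1 = 0) :
    ∀ j ∈ J, Filter.Tendsto (fun i => ‖cfcₙ f (u i) * j‖) Filter.atTop (nhds 0) := by
  intro j hj
  -- quasispectrum of each `u i` lies in `[0,1]`
  have hspec : ∀ i, ∀ x ∈ quasispectrum ℝ (u i), x ∈ Set.Icc (0:ℝ) 1 := by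
    intro i x hx
    refine ⟨quasispectrum_nonneg_of_nonneg (u i) (hpos i) x hx, ?_⟩
    rw [Unitization.quasispectrum_eq_spectrum_inr' ℝ ℂ] at hx
    calc x ≤ ‖x‖ := le_abs_self x
      _ ≤ ‖(u i : Unitization ℂ B)‖ := spectrum.norm_le_norm_of_mem hx
      _ = ‖u i‖ := Unitization.norm_inr (u i)
      _ ≤ 1 := hnorm i
  -- the key convergence: `(u i - u i ^ 2) * j → 0`
  have key : Tendsto (fun i => ‖(u i - u i * u i) * j‖) atTop (nhds 0) := by
    refine squeeze_zero (fun i => norm_nonneg _) (fun i => ?_) (happrox j hj)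
    have h1 : (u i - u i * u i) * j = u i * (j - u i * j) := by
      rw [sub_mul, mul_sub, mul_assoc]
    rw [h1]
    calc ‖u i * (j - u i * j)‖ ≤ ‖u i‖ * ‖j - u i * j‖ := norm_mul_le _ _
      _ ≤ 1 * ‖j - u i * j‖ :=
        mul_le_mul_of_nonneg_right (hnorm i) (norm_nonneg _)
      _ = ‖u i * j - j‖ := by rw [one_mul, norm_sub_rev]
  -- a bound for `|f|` on `[0,1]`
  obtain ⟨M, hM⟩ := isCompact_Icc.exists_bound_of_continuousOn
    (f := f) (s := Set.Icc (0:ℝ) 1) hf.continuousOn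
  have hM1 : (0:ℝ) < max M 1 := lt_of_lt_of_le one_pos (le_max_right M 1)
  set M' : ℝ := max M 1 with hM'
  have hMf : ∀ t ∈ Set.Icc (0:ℝ) 1, |f t| ≤ M' := fun t ht =>
    (hM t ht).trans (le_max_left M 1)
  -- main ε-argument
  rw [Metric.tendsto_nhds]
  intro ε hε
  set ε' : ℝ := ε / (2 * (‖j‖ + 1)) with hε'def
  have hjpos : (0:ℝ) < ‖j‖ + 1 := by positivity
  have hε' : 0 < ε' := by positivity
  -- choose δ such that |f| < ε' near 0 and 1
  obtain ⟨δ₀, hδ₀, hfδ₀⟩ := Metric.continuousAt_iff.mp hf.continuousAt ε' hε'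
  obtain ⟨δ₁, hδ₁, hfδ₁⟩ := Metric.continuousAt_iff.mp (hf.continuousAt (x := 1)) ε' hε'
  set δ : ℝ := min (min δ₀ δ₁) (1/2) with hδdef
  have hδpos : 0 < δ := lt_min (lt_min hδ₀ hδ₁) one_half_pos
  have hδhalf : δ ≤ 1/2 := min_le_right _ _
  set c : ℝ := δ / 2 with hcdef
  have hcpos : 0 < c := by positivity
  -- smallness of f where t(1-t) < c, t ∈ [0,1]
  have hsmall : ∀ x ∈ Set.Icc (0:ℝ) 1, x - x * x < c → |f x| ≤ ε' := by
    intro x hx hxc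
    have hx' : ¬ (δ ≤ x ∧ x ≤ 1 - δ) := by
      rintro ⟨h1, h2⟩
      have : δ * (1 - δ) ≤ x * (1 - x) := by nlinarith
      have : δ / 2 ≤ x - x * x := by nlinarith
      linarith
    rcases not_and_or.mp hx' with h1 | h2
    · push_neg at h1
      have : dist x 0 < δ₀ := by
        rw [Real.dist_eq, sub_zero, abs_of_nonneg hx.1]
        exact lt_of_lt_of_le h1 ((min_le_left _ _).trans (min_le_left _ _))
      have := hfδ₀ this
      rw [Real.dist_eq, hf0, sub_zero] at this
      exact this.le
    · push_neg at h2
      have : dist x 1 < δ₁ := by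
        rw [Real.dist_eq, abs_of_nonpos (by linarith [hx.2])]
        have : 1 - δ < x := by linarith
        have hδ1' : δ ≤ δ₁ := (min_le_left _ _).trans (min_le_right _ _)
        linarith
      have := hfδ₁ this
      rw [Real.dist_eq, hf1, sub_zero] at this
      exact this.le
  -- the correction function q
  set q : ℝ → ℝ := fun t => f t / max (t - t * t) c with hqdef
  have hqcont : Continuous q := by
    apply hf.div (Continuous.max (by fun_prop) continuous_const)
    intro t
    have : c ≤ max (t - t * t) c := le_max_right _ _
    positivity
  have hq0 : q 0 = 0 := by simp [hqdef, hf0]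
  -- decomposition of cfcₙ f
  set g : ℝ → ℝ := fun t => f t - q t * (t - t * t) with hgdef
  have hgcont : Continuous g := by fun_prop
  have hg0 : g 0 = 0 := by simp [hgdef, hf0]
  have hdecomp : ∀ i, cfcₙ f (u i) = cfcₙ g (u i) + cfcₙ q (u i) * (u i - u i * u i) := by
    intro i
    have hsa : IsSelfAdjoint (u i) := IsSelfAdjoint.of_nonneg (hpos i)
    have hid : ContinuousOn (fun t : ℝ => t) (quasispectrum ℝ (u i)) :=
      continuous_id.continuousOn
    have h1 : cfcₙ (fun t : ℝ => t - t * t) (u i) = u i - u i * u i := by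
      rw [cfcₙ_sub (fun t : ℝ => t) (fun t : ℝ => t * t) (u i) hid rfl (hid.mul hid)
        (by norm_num),
        cfcₙ_mul (fun t : ℝ => t) (fun t : ℝ => t) (u i) hid rfl hid rfl,
        cfcₙ_id' ℝ (u i) hsa]
    have hqh : Continuous (fun t : ℝ => q t * (t - t * t)) := hqcont.mul (by fun_prop)
    calc cfcₙ f (u i)
        = cfcₙ (fun t => g t + q t * (t - t * t)) (u i) := by
          congr 1; funext t; simp only [hgdef]; ring
      _ = cfcₙ g (u i) + cfcₙ (fun t => q t * (t - t * t)) (u i) :=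
          cfcₙ_add g _ (u i) hgcont.continuousOn hg0 hqh.continuousOn (by simp [hq0])
      _ = cfcₙ g (u i) + cfcₙ q (u i) * (u i - u i * u i) := by
          rw [cfcₙ_mul q (fun t : ℝ => t - t * t) (u i) hqcont.continuousOn hq0
            ((hid.sub (hid.mul hid)) : ContinuousOn _ _) (by norm_num), h1]
  -- norm bounds
  have hgb : ∀ i, ‖cfcₙ g (u i)‖ ≤ ε' := by
    intro i
    refine norm_cfcₙ_le fun x hx => ?_
    rw [Real.norm_eq_abs]
    have hx01 := hspec i x hx
    have hxnn : 0 ≤ x - x * x := by nlinarith [hx01.1, hx01.2]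
    rcases le_or_gt c (x - x * x) with hcase | hcase
    · have hne : x - x * x ≠ 0 := by linarith
      have : g x = 0 := by
        simp only [hgdef, hqdef, max_eq_left hcase]
        rw [div_mul_cancel₀ _ hne, sub_self]
      rw [this]; simpa using hε'.le
    · have hmax : max (x - x * x) c = c := max_eq_right hcase.le
      have : g x = f x * (1 - (x - x * x) / c) := by
        simp only [hgdef, hqdef, hmax]; ring
      rw [this, abs_mul]
      have h01 : |1 - (x - x * x) / c| ≤ 1 := by
        rw [abs_le]
        constructor
        · have : (x - x * x) / c < 1 := (div_lt_one hcpos).mpr hcase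
          linarith
        · have : 0 ≤ (x - x * x) / c := div_nonneg hxnn hcpos.le
          linarith
      calc |f x| * |1 - (x - x * x) / c| ≤ |f x| * 1 :=
            mul_le_mul_of_nonneg_left h01 (abs_nonneg _)
        _ = |f x| := mul_one _
        _ ≤ ε' := hsmall x hx01 hcase
  have hqb : ∀ i, ‖cfcₙ q (u i)‖ ≤ M' / c := by
    intro i
    refine norm_cfcₙ_le fun x hx => ?_
    rw [Real.norm_eq_abs]
    have hx01 := hspec i x hx
    have hcmax : c ≤ max (x - x * x) c := le_max_right _ _
    have hmaxpos : 0 < max (x - x * x) c := lt_of_lt_of_le hcpos hcmax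
    simp only [hqdef]
    rw [abs_div, abs_of_pos hmaxpos]
    exact div_le_div₀ (by positivity) (hMf x hx01) hcpos hcmax
  -- choose N
  have hMc : 0 < M' / c := by positivity
  have hkey' := Metric.tendsto_nhds.mp key ((ε / 2) * (c / M')) (by positivity)
  rw [Filter.eventually_atTop] at hkey'
  obtain ⟨N, hN⟩ := hkey'
  rw [Filter.eventually_atTop]
  refine ⟨N, fun i hi => ?_⟩
  have hNi := hN i hi
  rw [Real.dist_eq, sub_zero, abs_of_nonneg (norm_nonneg _)] at hNi ⊢
  calc ‖cfcₙ f (u i) * j‖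
      = ‖cfcₙ g (u i) * j + cfcₙ q (u i) * ((u i - u i * u i) * j)‖ := by
        rw [hdecomp i, add_mul, mul_assoc]
    _ ≤ ‖cfcₙ g (u i) * j‖ + ‖cfcₙ q (u i) * ((u i - u i * u i) * j)‖ := norm_add_le _ _
    _ ≤ ‖cfcₙ g (u i)‖ * ‖j‖ + ‖cfcₙ q (u i)‖ * ‖(u i - u i * u i) * j‖ :=
        add_le_add (norm_mul_le _ _) (norm_mul_le _ _)
    _ ≤ ε' * ‖j‖ + (M' / c) * ((ε / 2) * (c / M')) :=
        add_le_add (mul_le_mul_of_nonneg_right (hgb i) (norm_nonneg j))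
          (mul_le_mul (hqb i) hNi.le (norm_nonneg _) hMc.le)
    _ < ε := by
        have h1 : ε' * ‖j‖ < ε / 2 := by
          calc ε' * ‖j‖ < ε' * (‖j‖ + 1) :=
                mul_lt_mul_of_pos_left (lt_add_one _) hε'
            _ = ε / 2 := by rw [hε'def]; field_simp
        have h2 : (M' / c) * ((ε / 2) * (c / M')) = ε / 2 := by
          field_simp
        rw [h2]; linarith
end

section
/- Let G be a group and let H1, H2 be complex Hilbert spaces equipped with unitary representations ρ1 : G →* (H1 ≃ₗᵢ[ℂ] H1) and ρ2 : G →* (H2 ≃ₗᵢ[ℂ] H2). If there exists a (not necessarily equivariant) linear isometric isomorphism H1 ≃ₗᵢ[ℂ] H2, then there exists a linear isometric isomorphism V : ℓ²(G;H1) → ℓ²(G;H2) that intertwines the diagonal actions: for every g ∈ G and every f ∈ ℓ²(G;H1), V applied to the family h ↦ ρ1(g)(f(g⁻¹·h)) equals the family h ↦ ρ2(g)((V f)(g⁻¹·h)). -/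
set_option maxHeartbeats 1000000

section Aux

variable {ι : Type*} {E F : ι → Type*}
  [∀ i, NormedAddCommGroup (E i)] [∀ i, NormedAddCommGroup (F i)]

theorem memℓp_of_norm_eq {f : ∀ i, E i} {g : ∀ i, F i} {p : ENNReal}
    (h : ∀ i, ‖g i‖ = ‖f i‖) (hf : Memℓp f p) : Memℓp g p := by
  unfold Memℓp at *
  split_ifs at * with h0 h1
  · exact hf.subset fun i hi => by
      simp only [Set.mem_setOf_eq] at *
      intro hfi; apply hi
      exact norm_eq_zero.mp (by rw [h i, hfi, norm_zero])
  · simpa only [h] using hf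
  · simpa only [h] using hf

variable [∀ i, NormedSpace ℂ (E i)] [∀ i, NormedSpace ℂ (F i)]

/-- Pointwise congruence of `ℓ²` spaces along a family of linear isometric equivalences. -/
noncomputable def lpCongrRight (ε : ∀ i, E i ≃ₗᵢ[ℂ] F i) :
    lp E 2 ≃ₗᵢ[ℂ] lp F 2 where
  toFun f := ⟨fun i => ε i (f i),
    memℓp_of_norm_eq (fun i => (ε i).norm_map _) (lp.memℓp f)⟩
  invFun f := ⟨fun i => (ε i).symm (f i),
    memℓp_of_norm_eq (fun i => (ε i).symm.norm_map _) (lp.memℓp f)⟩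
  left_inv f := by ext i; simp
  right_inv f := by ext i; simp
  map_add' f g := by ext i; simp [lp.coeFn_add]; rfl
  map_smul' c f := by ext i; simp [lp.coeFn_smul]
  norm_map' f := by
    have hp : (0:ℝ) < (2 : ENNReal).toReal := by norm_num
    rw [lp.norm_eq_tsum_rpow hp, lp.norm_eq_tsum_rpow hp]
    congr 1
    refine tsum_congr fun i => ?_
    congr 1
    exact (ε i).norm_map (f i)

@[simp] theorem lpCongrRight_apply (ε : ∀ i, E i ≃ₗᵢ[ℂ] F i)
    (f : lp E 2) (i : ι) : (lpCongrRight ε f : ∀ i, F i) i = ε i (f i) := rfl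

end Aux

/-- a (not necessarily equivariant) isometric isomorphism between two unitary
`G`-representations induces an equivariant isometric isomorphism between the associated
`ℓ²(G;H)`-spaces with the diagonal actions. -/
theorem exists_equivariant_isometryEquiv_l2_of_isometryEquiv
    {G : Type*} [Group G] {H1 H2 : Type*}
    [NormedAddCommGroup H1] [InnerProductSpace ℂ H1] [CompleteSpace H1]
    [NormedAddCommGroup H2] [InnerProductSpace ℂ H2] [CompleteSpace H2]
    (ρ1 : G →* (H1 ≃ₗᵢ[ℂ] H1)) (ρ2 : G →* (H2 ≃ₗᵢ[ℂ] H2))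
    (e : H1 ≃ₗᵢ[ℂ] H2) :
    ∃ V : lp (fun _ : G => H1) 2 ≃ₗᵢ[ℂ] lp (fun _ : G => H2) 2,
      ∀ (g : G) (f : lp (fun _ : G => H1) 2),
        ∃ hf : Memℓp (fun h : G => ρ1 g (f (g⁻¹ * h))) 2,
          ∀ h : G,
            (V (⟨fun h : G => ρ1 g (f (g⁻¹ * h)), hf⟩ : lp (fun _ : G => H1) 2)) h
              = ρ2 g ((V f) (g⁻¹ * h)) := by
  set ε : G → (H1 ≃ₗᵢ[ℂ] H2) := fun h => ((ρ1 h).symm.trans e).trans (ρ2 h) with hε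
  refine ⟨lpCongrRight (fun h : G => ε h), fun g f => ?_⟩
  have hp : (0:ℝ) < (2 : ENNReal).toReal := by norm_num
  have hmem : Memℓp (fun h : G => ρ1 g (f (g⁻¹ * h))) 2 := by
    apply memℓp_gen
    simp only [LinearIsometryEquiv.norm_map]
    exact ((lp.memℓp f).summable hp).comp_injective
      (fun a b hab => by simpa using hab : Function.Injective fun h : G => g⁻¹ * h)
  refine ⟨hmem, fun h => ?_⟩
  show ε h (ρ1 g (f (g⁻¹ * h))) = ρ2 g (ε (g⁻¹ * h) (f (g⁻¹ * h)))
  have hgh : g * (g⁻¹ * h) = h := by group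
  simp only [hε, LinearIsometryEquiv.trans_apply]
  rw [← hgh, map_mul ρ1, map_mul ρ2, LinearIsometryEquiv.mul_def,
    LinearIsometryEquiv.mul_def]
  simp [LinearIsometryEquiv.trans_apply]
end

section
/- Let G be a group and let H1, H2 be complex Hilbert spaces equipped with unitary representations ρ1 : G →* (H1 ≃ₗᵢ[ℂ] H1) and ρ2 : G →* (H2 ≃ₗᵢ[ℂ] H2). Suppose there exist Hilbert (orthonormal topological) bases of H1 and of H2 indexed by types ι1 and ι2 respectively with #ι1 ≤ #ι2 (cardinal inequality). Then there exists a linear isometry V : ℓ²(G;H1) → ℓ²(G;H2) that intertwines the diagonal actions: for every g ∈ G and every f ∈ ℓ²(G;H1), V applied to the family h ↦ ρ1(g)(f(g⁻¹·h)) equals the family h ↦ ρ2(g)((V f)(g⁻¹·h)). -/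
open scoped ENNReal

section Aux

lemma two_toReal_pos : 0 < (2 : ℝ≥0∞).toReal := by norm_num

/-- Composing pointwise with a family of linear isometries preserves `Memℓp`. -/
lemma memℓp_comp_isometry {G : Type*} {H1 H2 : Type u}
    [NormedAddCommGroup H1] [InnerProductSpace ℂ H1]
    [NormedAddCommGroup H2] [InnerProductSpace ℂ H2]
    (T : G → (H1 →ₗᵢ[ℂ] H2)) {f : ∀ _ : G, H1} (hf : Memℓp f 2) :
    Memℓp (fun h => T h (f h)) 2 := by
  apply memℓp_gen
  have hs := (memℓp_gen_iff two_toReal_pos).1 hf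
  simpa [LinearIsometry.norm_map] using hs

/-- Pointwise composition with a family of linear isometries, as a linear isometry on `ℓ²`. -/
noncomputable def lpCompIsometry {G : Type*} {H1 H2 : Type u}
    [NormedAddCommGroup H1] [InnerProductSpace ℂ H1]
    [NormedAddCommGroup H2] [InnerProductSpace ℂ H2]
    (T : G → (H1 →ₗᵢ[ℂ] H2)) :
    lp (fun _ : G => H1) 2 →ₗᵢ[ℂ] lp (fun _ : G => H2) 2 where
  toFun f := ⟨fun h => T h (f h), memℓp_comp_isometry T (lp.memℓp f)⟩
  map_add' f g := by
    ext h
    simp [lp.coeFn_add, Pi.add_apply]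
    rfl
  map_smul' c f := by
    ext h
    simp [lp.coeFn_smul, Pi.smul_apply]
  norm_map' f := by
    rw [lp.norm_eq_tsum_rpow two_toReal_pos, lp.norm_eq_tsum_rpow two_toReal_pos]
    congr 1
    apply tsum_congr
    intro h
    simp [LinearIsometry.norm_map]

/-- Extension by zero along an injection, as a linear isometry between `ℓ²` spaces. -/
noncomputable def lpExtendIsometry {ι1 ι2 : Type v} (j : ι1 → ι2) (hj : Function.Injective j) :
    lp (fun _ : ι1 => ℂ) 2 →ₗᵢ[ℂ] lp (fun _ : ι2 => ℂ) 2 where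
  toFun f := ⟨Function.extend j (⇑f) 0, by
    apply memℓp_gen
    have key : (fun i => ‖Function.extend j (⇑f) 0 i‖ ^ (2 : ℝ≥0∞).toReal)
        = Function.extend j (fun a => ‖f a‖ ^ (2 : ℝ≥0∞).toReal) 0 := by
      funext i
      rw [Function.apply_extend (fun x : ℂ => ‖x‖ ^ (2 : ℝ≥0∞).toReal)]
      congr 1
      funext a
      simp [Real.zero_rpow (ne_of_gt two_toReal_pos)]
    rw [key]
    exact (hasSum_extend_zero hj).2 ((memℓp_gen_iff two_toReal_pos).1 (lp.memℓp f)).hasSum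
      |>.summable⟩
  map_add' f g := by
    ext i
    simp only [lp.coeFn_add, Pi.add_apply]
    rcases em (∃ a, j a = i) with ⟨a, rfl⟩ | hi
    · simp [hj.extend_apply]
    · rw [Function.extend_apply', Function.extend_apply', Function.extend_apply'] <;>
        simp_all
  map_smul' c f := by
    ext i
    simp only [lp.coeFn_smul, Pi.smul_apply]
    rcases em (∃ a, j a = i) with ⟨a, rfl⟩ | hi
    · simp [hj.extend_apply]
    · rw [Function.extend_apply', Function.extend_apply'] <;> simp_all
  norm_map' f := by
    rw [lp.norm_eq_tsum_rpow two_toReal_pos, lp.norm_eq_tsum_rpow two_toReal_pos]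
    congr 1
    have key : (fun i => ‖Function.extend j (⇑f) 0 i‖ ^ (2 : ℝ≥0∞).toReal)
        = Function.extend j (fun a => ‖f a‖ ^ (2 : ℝ≥0∞).toReal) 0 := by
      funext i
      rw [Function.apply_extend (fun x : ℂ => ‖x‖ ^ (2 : ℝ≥0∞).toReal)]
      congr 1
      funext a
      simp [Real.zero_rpow (ne_of_gt two_toReal_pos)]
    calc (∑' i, ‖(⟨Function.extend j (⇑f) 0, _⟩ : lp (fun _ : ι2 => ℂ) 2) i‖ ^ (2 : ℝ≥0∞).toReal)
        = ∑' i, Function.extend j (fun a => ‖f a‖ ^ (2 : ℝ≥0∞).toReal) 0 i := by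
          exact tsum_congr fun i => congrFun key i
      _ = ∑' a, ‖f a‖ ^ (2 : ℝ≥0∞).toReal := by
          exact ((hasSum_extend_zero hj).2
            ((memℓp_gen_iff two_toReal_pos).1 (lp.memℓp f)).hasSum).tsum_eq

end Aux

/-- if `H1` admits a Hilbert basis of cardinality at most that of a Hilbert basis
of `H2`, then there is an equivariant linear isometry `ℓ²(G;H1) → ℓ²(G;H2)` for the diagonal
actions of unitary representations. -/
theorem exists_equivariant_isometry_l2_of_hilbertBasis
    {G : Type*} [Group G] {H1 H2 : Type u}
    [NormedAddCommGroup H1] [InnerProductSpace ℂ H1] [CompleteSpace H1]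
    [NormedAddCommGroup H2] [InnerProductSpace ℂ H2] [CompleteSpace H2]
    (ρ1 : G →* (H1 ≃ₗᵢ[ℂ] H1)) (ρ2 : G →* (H2 ≃ₗᵢ[ℂ] H2))
    {ι1 ι2 : Type v} (b1 : HilbertBasis ι1 ℂ H1) (b2 : HilbertBasis ι2 ℂ H2)
    (hcard : Cardinal.mk ι1 ≤ Cardinal.mk ι2) :
    ∃ V : lp (fun _ : G => H1) 2 →ₗᵢ[ℂ] lp (fun _ : G => H2) 2,
      ∀ (g : G) (f : lp (fun _ : G => H1) 2),
        ∃ hf : Memℓp (fun h : G => ρ1 g (f (g⁻¹ * h))) 2,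
          ∀ h : G,
            (V (⟨fun h : G => ρ1 g (f (g⁻¹ * h)), hf⟩ : lp (fun _ : G => H1) 2)) h
              = ρ2 g ((V f) (g⁻¹ * h)) := by
  obtain ⟨j⟩ := (Cardinal.le_def ι1 ι2).1 hcard
  -- the basic isometry `H1 → H2`
  let W : H1 →ₗᵢ[ℂ] H2 :=
    (b2.repr.symm.toLinearIsometry).comp
      ((lpExtendIsometry j j.injective).comp b1.repr.toLinearIsometry)
  -- the twisted family of isometries
  let T : G → (H1 →ₗᵢ[ℂ] H2) := fun h =>
    ((ρ2 h).toLinearIsometry).comp (W.comp ((ρ1 h⁻¹).toLinearIsometry))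
  refine ⟨lpCompIsometry T, fun g f => ?_⟩
  have hmem : Memℓp (fun h : G => ρ1 g (f (g⁻¹ * h))) 2 := by
    apply memℓp_gen
    have hs := (memℓp_gen_iff two_toReal_pos).1 (lp.memℓp f)
    have := (Equiv.mulLeft g⁻¹).summable_iff.2 hs
    simpa [Function.comp_def] using this
  refine ⟨hmem, fun h => ?_⟩
  show T h (ρ1 g (f (g⁻¹ * h))) = ρ2 g (T (g⁻¹ * h) (f (g⁻¹ * h)))
  simp only [T, LinearIsometry.coe_comp, Function.comp_apply,
    LinearIsometryEquiv.coe_toLinearIsometry]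
  have e1 : ρ1 h⁻¹ (ρ1 g (f (g⁻¹ * h))) = ρ1 ((g⁻¹ * h)⁻¹) (f (g⁻¹ * h)) := by
    rw [show ((g⁻¹ * h)⁻¹ : G) = h⁻¹ * g by group, map_mul,
      LinearIsometryEquiv.coe_mul, Function.comp_apply]
  rw [e1]
  rw [show (h : G) = g * (g⁻¹ * h) by group, map_mul, LinearIsometryEquiv.coe_mul,
    Function.comp_apply]
  simp [inv_mul_cancel_left]
end

section
/- Let Z be a nonempty compact metric space, C ⊆ Z a closed subset, let A and B be C*-algebras, and let π : B → A be a surjective *-homomorphism. Suppose g : C → B and f : Z → A are continuous and satisfy π(g(x)) = f(x) for all x ∈ C. Then there exists a continuous function h : Z → B such that h(x) = g(x) for all x ∈ C, π(h(z)) = f(z) for all z ∈ Z, and sup_{z∈Z} ‖h(z)‖ = max(sup_{x∈C} ‖g(x)‖, sup_{z∈Z} ‖f(z)‖) (where the supremum over the empty set is 0). -/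
open scoped CStarAlgebra
open Unitization

section Trunc
variable {E : Type*} [NonUnitalCStarAlgebra E]

noncomputable def myTrunc (b₀ : E) (n : ℝ) : E :=
  ((inr b₀ : Unitization ℂ E) *
    cfc (fun t : ℝ => n / Real.sqrt (max t (n ^ 2))) (star (inr b₀ : Unitization ℂ E) * inr b₀)).snd

lemma continuous_truncFun {n : ℝ} (hn : 0 < n) :
    Continuous (fun t : ℝ => n / Real.sqrt (max t (n ^ 2))) := by
  apply Continuous.div continuous_const
  · exact Real.continuous_sqrt.comp (continuous_id.max continuous_const)
  · intro t
    have h1 : (0:ℝ) < max t (n ^ 2) := lt_max_of_lt_right (by positivity)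
    positivity

lemma truncFun_bound {n : ℝ} (hn : 0 < n) {x : ℝ} (hx : 0 ≤ x) :
    (n / Real.sqrt (max x (n ^ 2))) * x * (n / Real.sqrt (max x (n ^ 2))) ≤ n ^ 2 := by
  have hm : (0:ℝ) < max x (n ^ 2) := lt_max_of_lt_right (by positivity)
  have hs : Real.sqrt (max x (n ^ 2)) * Real.sqrt (max x (n ^ 2)) = max x (n ^ 2) :=
    Real.mul_self_sqrt hm.le
  have hx' : x ≤ max x (n ^ 2) := le_max_left _ _
  rw [div_mul_eq_mul_div, div_mul_div_comm, hs]
  rw [div_le_iff₀ hm]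
  nlinarith

lemma inr_myTrunc (b₀ : E) (n : ℝ) :
    (inr (myTrunc b₀ n) : Unitization ℂ E) =
      (inr b₀ : Unitization ℂ E) *
        cfc (fun t : ℝ => n / Real.sqrt (max t (n ^ 2)))
          (star (inr b₀ : Unitization ℂ E) * inr b₀) := by
  rw [myTrunc]
  generalize (cfc (fun t : ℝ => n / Real.sqrt (max t (n ^ 2)))
      (star (inr b₀ : Unitization ℂ E) * inr b₀)) = u
  have h1 : ((inr b₀ : Unitization ℂ E) * u).fst = 0 := by simp
  conv_rhs => rw [← Unitization.inl_fst_add_inr_snd_eq ((inr b₀ : Unitization ℂ E) * u)]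
  rw [h1]
  simp

lemma norm_myTrunc_le (b₀ : E) {n : ℝ} (hn : 0 < n) : ‖myTrunc b₀ n‖ ≤ n := by
  set c : Unitization ℂ E := star (inr b₀ : Unitization ℂ E) * inr b₀ with hc
  have hc0 : (0 : Unitization ℂ E) ≤ c := star_mul_self_nonneg _
  set φ : ℝ → ℝ := fun t => n / Real.sqrt (max t (n ^ 2)) with hφ
  have hφc : Continuous φ := continuous_truncFun hn
  have key : (inr (myTrunc b₀ n) : Unitization ℂ E) = inr b₀ * cfc φ c := inr_myTrunc b₀ n
  rw [← Unitization.norm_inr (𝕜 := ℂ)]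
  have h2 : ‖(inr (myTrunc b₀ n) : Unitization ℂ E)‖ ^ 2 ≤ n ^ 2 := by
    rw [sq, ← CStarRing.norm_star_mul_self, key]
    have hsa : star (cfc φ c) = cfc φ c := cfc_predicate φ c |>.star_eq
    have hrw : star ((inr b₀ : Unitization ℂ E) * cfc φ c) * (inr b₀ * cfc φ c)
        = cfc φ c * (c * cfc φ c) := by
      rw [star_mul, hsa, hc]
      noncomm_ring
    rw [hrw]
    have h3 : cfc (fun t : ℝ => φ t * (t * φ t)) c = cfc φ c * (c * cfc φ c) := by
      rw [cfc_mul φ (fun t : ℝ => t * φ t) c hφc.continuousOn (by fun_prop),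
        cfc_mul (fun t : ℝ => t) φ c (by fun_prop) hφc.continuousOn, cfc_id' ℝ c]
    rw [← h3]
    apply norm_cfc_le (by positivity)
    intro x hx
    have hx0 : 0 ≤ x :=
      (StarOrderedRing.nonneg_iff_spectrum_nonneg (R := ℝ) c).mp hc0 x hx
    have hb := truncFun_bound hn hx0
    have hpos : 0 ≤ φ x := by rw [hφ]; positivity
    rw [Real.norm_eq_abs, abs_of_nonneg (by positivity)]
    calc φ x * (x * φ x) = φ x * x * φ x := by ring
      _ ≤ n ^ 2 := hb
  nlinarith [norm_nonneg (inr (myTrunc b₀ n) : Unitization ℂ E)]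

lemma map_myTrunc {F : Type*} [NonUnitalCStarAlgebra F] (ψ : E →⋆ₙₐ[ℂ] F) (b₀ : E) {n : ℝ}
    (hn : 0 < n) (hb : ‖ψ b₀‖ ≤ n) : ψ (myTrunc b₀ n) = ψ b₀ := by
  set φ : ℝ → ℝ := fun t => n / Real.sqrt (max t (n ^ 2)) with hφ
  have hφc : Continuous φ := continuous_truncFun hn
  set c : Unitization ℂ E := star (inr b₀ : Unitization ℂ E) * inr b₀ with hc
  set d : Unitization ℂ F := star (inr (ψ b₀) : Unitization ℂ F) * inr (ψ b₀) with hd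
  have key : (inr (myTrunc b₀ n) : Unitization ℂ E) = inr b₀ * cfc φ c := inr_myTrunc b₀ n
  have hψc : Continuous ψ :=
    AddMonoidHomClass.continuous_of_bound ψ 1
      (by simpa using fun a => NonUnitalStarAlgHom.norm_apply_le ψ a)
  have hfst : Continuous (fun x : Unitization ℂ E => x.fst) := by
    refine AddMonoidHomClass.continuous_of_bound (Unitization.fstHom ℂ E) 1 fun x => ?_
    rw [one_mul]
    calc ‖(Unitization.fstHom ℂ E) x‖ = ‖x.fst‖ := rfl
      _ ≤ ‖x‖ := by rw [Unitization.norm_eq_sup]; exact le_sup_left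
  have hsnd : Continuous (fun x : Unitization ℂ E => x.snd) := by
    rw [(Unitization.isometry_inr (𝕜 := ℂ) (A := E)).isEmbedding.continuous_iff]
    have heq2 : ((inr : E → Unitization ℂ E) ∘ (fun x : Unitization ℂ E => x.snd))
        = fun x => x - algebraMap ℂ (Unitization ℂ E) (x.fst) := by
      funext x
      simp only [Function.comp_apply, Unitization.algebraMap_eq_inl]
      have := Unitization.inl_fst_add_inr_snd_eq x
      rw [eq_sub_iff_add_eq, add_comm]
      exact this
    rw [heq2]
    exact continuous_id.sub ((continuous_algebraMap ℂ _).comp hfst)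
  have hcont : Continuous (starMap ψ) := by
    have heq : ⇑(starMap ψ) = fun x : Unitization ℂ E =>
        (algebraMap ℂ (Unitization ℂ F) (x.fst)) + inr (ψ (x.snd)) := by
      funext x
      induction x using Unitization.ind with
      | inl_add_inr r a =>
        rw [map_add, starMap_inl, starMap_inr]
        simp [Unitization.algebraMap_eq_inl]
    rw [heq]
    exact ((continuous_algebraMap ℂ _).comp hfst).add
      (Unitization.continuous_inr.comp (hψc.comp hsnd))
  have hrw : starMap ψ c = d := by
    rw [hc, hd, map_mul, map_star, starMap_inr]
  have hinj : Function.Injective (inr : F → Unitization ℂ F) := inr_injective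
  apply hinj
  rw [← starMap_inr ψ, key, map_mul, starMap_inr]
  have hcfc : starMap ψ (cfc φ c) = cfc φ d := by
    rw [← hrw]
    exact StarAlgHom.map_cfc (starMap ψ) φ c hφc.continuousOn hcont
      (IsSelfAdjoint.star_mul_self _) (hrw ▸ IsSelfAdjoint.star_mul_self (inr (ψ b₀)))
  rw [hcfc]
  have h1 : cfc φ d = 1 := by
    rw [show (1 : Unitization ℂ F) = cfc (fun _ : ℝ => (1:ℝ)) d from (cfc_const_one ℝ d).symm]
    apply cfc_congr
    intro x hx
    have hxle : x ≤ n ^ 2 := by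
      have h2 : ‖x‖ ≤ ‖d‖ := spectrum.norm_le_norm_of_mem hx
      have h3 : ‖d‖ ≤ n ^ 2 := by
        rw [hd, ← Unitization.inr_star, ← Unitization.inr_mul, Unitization.norm_inr]
        calc ‖star (ψ b₀) * ψ b₀‖ ≤ ‖star (ψ b₀)‖ * ‖ψ b₀‖ := norm_mul_le _ _
          _ = ‖ψ b₀‖ * ‖ψ b₀‖ := by rw [norm_star]
          _ ≤ n * n := by nlinarith [norm_nonneg (ψ b₀)]
          _ = n ^ 2 := by ring
      rw [Real.norm_eq_abs] at h2
      nlinarith [abs_nonneg x, le_abs_self x]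
    have hmax : max x (n ^ 2) = n ^ 2 := max_eq_right hxle
    simp only [hφ, hmax, Real.sqrt_sq hn.le, div_self hn.ne']
  rw [h1, mul_one]

end Trunc

section Homs

variable {Z : Type*} [TopologicalSpace Z]
variable {A B : Type*} [NonUnitalCStarAlgebra A] [NonUnitalCStarAlgebra B]

lemma starHom_continuous (π : B →⋆ₙₐ[ℂ] A) : Continuous π :=
  AddMonoidHomClass.continuous_of_bound π 1
    (by simpa using fun a => NonUnitalStarAlgHom.norm_apply_le π a)

/-- Evaluation at a point as a non-unital star algebra homomorphism. -/
def cmEval (z : Z) : C(Z, B) →⋆ₙₐ[ℂ] B where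
  toFun h := h z
  map_smul' _ _ := rfl
  map_zero' := rfl
  map_add' _ _ := rfl
  map_mul' _ _ := rfl
  map_star' _ := rfl

/-- Postcomposition with a star homomorphism, as a non-unital star algebra homomorphism. -/
def cmComp (π : B →⋆ₙₐ[ℂ] A) : C(Z, B) →⋆ₙₐ[ℂ] C(Z, A) where
  toFun h := ⟨fun z => π (h z), (starHom_continuous π).comp h.continuous⟩
  map_smul' c h := by ext z; exact map_smul π c (h z)
  map_zero' := by ext z; exact map_zero π
  map_add' h h' := by ext z; exact map_add π (h z) (h' z)
  map_mul' h h' := by ext z; exact map_mul π (h z) (h' z)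
  map_star' h := by ext z; exact map_star π (h z)

/-- Restriction to a subset as a non-unital star algebra homomorphism. -/
def cmRestr (C : Set Z) : C(Z, B) →⋆ₙₐ[ℂ] C(C, B) where
  toFun h := h.restrict C
  map_smul' _ _ := rfl
  map_zero' := rfl
  map_add' _ _ := rfl
  map_mul' _ _ := rfl
  map_star' _ := rfl

@[simp] lemma cmEval_apply (z : Z) (h : C(Z, B)) : (cmEval z : C(Z, B) →⋆ₙₐ[ℂ] B) h = h z := rfl
@[simp] lemma cmComp_apply (π : B →⋆ₙₐ[ℂ] A) (h : C(Z, B)) (z : Z) :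
    cmComp π h z = π (h z) := rfl
@[simp] lemma cmRestr_apply (C : Set Z) (h : C(Z, B)) (x : C) :
    (cmRestr C : C(Z, B) →⋆ₙₐ[ℂ] C(C, B)) h x = h x := rfl

/-- Elements can be lifted along surjective star homs without increasing the norm. -/
lemma elem_lift {π : B →⋆ₙₐ[ℂ] A} (hπ : Function.Surjective π) (a : A) :
    ∃ b : B, π b = a ∧ ‖b‖ ≤ ‖a‖ := by
  by_cases ha : a = 0
  · exact ⟨0, by simp [ha], by simp⟩
  · obtain ⟨b₀, hb₀⟩ := hπ a
    have hn : 0 < ‖a‖ := norm_pos_iff.mpr ha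
    refine ⟨myTrunc b₀ ‖a‖, ?_, norm_myTrunc_le b₀ hn⟩
    rw [map_myTrunc π b₀ hn (le_of_eq (congrArg norm hb₀)), hb₀]

end Homs

section Approx

variable {Z : Type*} [MetricSpace Z] [CompactSpace Z] [Nonempty Z]
variable {A B : Type*} [NonUnitalCStarAlgebra A] [NonUnitalCStarAlgebra B]

lemma approx_step (C : Set Z) [CompactSpace C] {π : B →⋆ₙₐ[ℂ] A} (hπ : Function.Surjective π)
    (F : C(Z, A)) (G : C(C, B)) (hcompat : ∀ x : C, π (G x) = F x)
    {ε : ℝ} (hε : 0 < ε) :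
    ∃ V : C(Z, B), (∀ z, ‖V z‖ ≤ max ‖F‖ ‖G‖) ∧ (∀ z, ‖π (V z) - F z‖ ≤ ε) ∧
      (∀ x : C, ‖V x - G x‖ ≤ ε) := by
  -- uniform continuity thresholds
  obtain ⟨δ₁, hδ₁pos, hδ₁⟩ := Metric.uniformContinuous_iff.mp
    (CompactSpace.uniformContinuous_of_continuous F.continuous) ε hε
  obtain ⟨δ₂, hδ₂pos, hδ₂⟩ := Metric.uniformContinuous_iff.mp
    (CompactSpace.uniformContinuous_of_continuous G.continuous) ε hε
  set δ : ℝ := min δ₁ δ₂ / 2 with hδ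
  have hδpos : 0 < δ := by positivity
  -- finite cover by δ-balls
  obtain ⟨t, -, htfin, htcov⟩ :=
    finite_cover_balls_of_compact (isCompact_univ (X := Z)) hδpos
  set T : Finset Z := htfin.toFinset with hT
  have hcov : ∀ z : Z, ∃ i ∈ T, dist z i < δ := by
    intro z
    have := htcov (Set.mem_univ z)
    simp only [Set.mem_iUnion, Metric.mem_ball] at this
    obtain ⟨i, hi, hzi⟩ := this
    exact ⟨i, htfin.mem_toFinset.mpr hi, hzi⟩
  -- the bump functions and their sum
  set ψ : Z → Z → ℝ := fun i z => max 0 (δ - dist z i) with hψ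
  have hψcont : ∀ i, Continuous (ψ i) := fun i =>
    continuous_const.max (continuous_const.sub (continuous_id.dist continuous_const))
  have hψnonneg : ∀ i z, 0 ≤ ψ i z := fun i z => le_max_left _ _
  set S : Z → ℝ := fun z => ∑ i ∈ T, ψ i z with hS
  have hScont : Continuous S := continuous_finset_sum T fun i _ => hψcont i
  have hSpos : ∀ z, 0 < S z := by
    intro z
    obtain ⟨i, hiT, hzi⟩ := hcov z
    refine Finset.sum_pos' (fun j _ => hψnonneg j z) ⟨i, hiT, ?_⟩
    simp only [hψ, lt_max_iff]
    right; linarith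
  -- the lifted values
  have hbex : ∀ i : Z, ∃ b : B,
      (∀ h : ∃ x : C, dist i (x : Z) < δ, b = G h.choose) ∧
      ((¬ ∃ x : C, dist i (x : Z) < δ) → π b = F i ∧ ‖b‖ ≤ ‖F i‖) := by
    intro i
    by_cases h : ∃ x : C, dist i (x : Z) < δ
    · exact ⟨G h.choose, fun _ => rfl, fun h' => absurd h h'⟩
    · obtain ⟨b, hb1, hb2⟩ := elem_lift hπ (F i)
      exact ⟨b, fun h' => absurd h' h, fun _ => ⟨hb1, hb2⟩⟩
  choose b hb1 hb2 using hbex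
  -- the coefficients
  set c : Z → Z → ℝ := fun i z => ψ i z / S z with hc
  have hcnonneg : ∀ i z, 0 ≤ c i z := fun i z => div_nonneg (hψnonneg i z) (hSpos z).le
  have hcsum : ∀ z, ∑ i ∈ T, c i z = 1 := by
    intro z
    rw [hc, ← Finset.sum_div]
    exact div_self (hSpos z).ne'
  have hcd : ∀ i z, c i z ≠ 0 → dist z i < δ := by
    intro i z hne
    by_contra hd
    apply hne
    have : ψ i z = 0 := max_eq_left (by push_neg at hd; linarith)
    simp [hc, this]
  -- the function V
  set V : Z → B := fun z => ∑ i ∈ T, ((c i z : ℝ) : ℂ) • b i with hV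
  have hVcont : Continuous V := by
    apply continuous_finset_sum
    intro i _
    exact ((Complex.continuous_ofReal.comp ((hψcont i).div hScont
      (fun z => (hSpos z).ne'))).smul continuous_const)
  refine ⟨⟨V, hVcont⟩, ?_, ?_, ?_⟩
  · -- norm bound
    intro z
    simp only [ContinuousMap.coe_mk, hV]
    calc ‖∑ i ∈ T, ((c i z : ℝ) : ℂ) • b i‖ ≤ ∑ i ∈ T, ‖((c i z : ℝ) : ℂ) • b i‖ :=
          norm_sum_le _ _
      _ ≤ ∑ i ∈ T, c i z * max ‖F‖ ‖G‖ := by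
          apply Finset.sum_le_sum
          intro i hiT
          rw [norm_smul, Complex.norm_real, Real.norm_eq_abs, abs_of_nonneg (hcnonneg i z)]
          apply mul_le_mul_of_nonneg_left _ (hcnonneg i z)
          by_cases h : ∃ x : C, dist i (x : Z) < δ
          · rw [hb1 i h]
            exact le_max_of_le_right (G.norm_coe_le_norm h.choose)
          · exact le_max_of_le_left ((hb2 i h).2.trans (F.norm_coe_le_norm i))
      _ = max ‖F‖ ‖G‖ := by rw [← Finset.sum_mul, hcsum z, one_mul]
  · -- approximate lift
    intro z
    simp only [ContinuousMap.coe_mk, hV]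
    have hπV : π (∑ i ∈ T, ((c i z : ℝ) : ℂ) • b i) = ∑ i ∈ T, ((c i z : ℝ) : ℂ) • π (b i) := by
      rw [map_sum]
      exact Finset.sum_congr rfl fun i _ => map_smul π _ _
    have hFz : F z = ∑ i ∈ T, ((c i z : ℝ) : ℂ) • F z := by
      rw [← Finset.sum_smul]
      have : (∑ i ∈ T, ((c i z : ℝ) : ℂ)) = 1 := by
        rw [← Complex.ofReal_sum, hcsum z, Complex.ofReal_one]
      rw [this, one_smul]
    rw [hπV]
    conv_lhs => rw [hFz]
    rw [← Finset.sum_sub_distrib]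
    have : ∀ i ∈ T, ((c i z : ℝ) : ℂ) • π (b i) - ((c i z : ℝ) : ℂ) • F z
        = ((c i z : ℝ) : ℂ) • (π (b i) - F z) := fun i _ => (smul_sub _ _ _).symm
    rw [Finset.sum_congr rfl this]
    calc ‖∑ i ∈ T, ((c i z : ℝ) : ℂ) • (π (b i) - F z)‖
        ≤ ∑ i ∈ T, ‖((c i z : ℝ) : ℂ) • (π (b i) - F z)‖ := norm_sum_le _ _
      _ ≤ ∑ i ∈ T, c i z * ε := by
          apply Finset.sum_le_sum
          intro i hiT
          rw [norm_smul, Complex.norm_real, Real.norm_eq_abs, abs_of_nonneg (hcnonneg i z)]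
          by_cases hc0 : c i z = 0
          · rw [hc0]; simp
          apply mul_le_mul_of_nonneg_left _ (hcnonneg i z)
          have hdzi : dist z i < δ := hcd i z hc0
          rw [← dist_eq_norm]
          have h2δ : δ + δ ≤ δ₁ := by
            rw [hδ]
            have := min_le_left δ₁ δ₂
            linarith
          by_cases h : ∃ x : C, dist i (x : Z) < δ
          · rw [hb1 i h, hcompat h.choose]
            refine (hδ₁ ?_).le
            rw [dist_comm]
            calc dist z ((h.choose : C) : Z) ≤ dist z i + dist i ((h.choose : C) : Z) :=
                  dist_triangle _ _ _
              _ < δ + δ := add_lt_add hdzi h.choose_spec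
              _ ≤ δ₁ := h2δ
          · rw [(hb2 i h).1]
            refine (hδ₁ ?_).le
            rw [dist_comm]
            calc dist z i < δ := hdzi
              _ ≤ δ₁ := by linarith
      _ = ε := by rw [← Finset.sum_mul, hcsum z, one_mul]
  · -- approximate extension
    intro x
    simp only [ContinuousMap.coe_mk, hV]
    have hGx : G x = ∑ i ∈ T, ((c i (x : Z) : ℝ) : ℂ) • G x := by
      rw [← Finset.sum_smul]
      have : (∑ i ∈ T, ((c i (x : Z) : ℝ) : ℂ)) = 1 := by
        rw [← Complex.ofReal_sum, hcsum (x : Z), Complex.ofReal_one]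
      rw [this, one_smul]
    conv_lhs => rw [hGx]
    rw [← Finset.sum_sub_distrib]
    have : ∀ i ∈ T, ((c i (x : Z) : ℝ) : ℂ) • b i - ((c i (x : Z) : ℝ) : ℂ) • G x
        = ((c i (x : Z) : ℝ) : ℂ) • (b i - G x) := fun i _ => (smul_sub _ _ _).symm
    rw [Finset.sum_congr rfl this]
    calc ‖∑ i ∈ T, ((c i (x : Z) : ℝ) : ℂ) • (b i - G x)‖
        ≤ ∑ i ∈ T, ‖((c i (x : Z) : ℝ) : ℂ) • (b i - G x)‖ := norm_sum_le _ _
      _ ≤ ∑ i ∈ T, c i (x : Z) * ε := by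
          apply Finset.sum_le_sum
          intro i hiT
          rw [norm_smul, Complex.norm_real, Real.norm_eq_abs,
            abs_of_nonneg (hcnonneg i (x : Z))]
          by_cases hc0 : c i (x : Z) = 0
          · rw [hc0]; simp
          apply mul_le_mul_of_nonneg_left _ (hcnonneg i (x : Z))
          have hdzi : dist (x : Z) i < δ := hcd i (x : Z) hc0
          have h : ∃ y : C, dist i (y : Z) < δ := ⟨x, by rwa [dist_comm]⟩
          rw [hb1 i h]
          rw [← dist_eq_norm]
          have h2δ : δ + δ ≤ δ₂ := by
            rw [hδ]
            have := min_le_right δ₁ δ₂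
            linarith
          refine (hδ₂ ?_).le
          rw [Subtype.dist_eq, dist_comm]
          calc dist (x : Z) ((h.choose : C) : Z)
              ≤ dist (x : Z) i + dist i ((h.choose : C) : Z) := dist_triangle _ _ _
            _ < δ + δ := add_lt_add hdzi h.choose_spec
            _ ≤ δ₂ := h2δ
      _ = ε := by rw [← Finset.sum_mul, hcsum (x : Z), one_mul]

end Approx

section Iterate

variable {Z : Type*} [MetricSpace Z] [CompactSpace Z] [Nonempty Z]
variable {A B : Type*} [NonUnitalCStarAlgebra A] [NonUnitalCStarAlgebra B]

lemma exists_exact_lift (C : Set Z) [CompactSpace C] {π : B →⋆ₙₐ[ℂ] A}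
    (hπ : Function.Surjective π) (F : C(Z, A)) (G : C(C, B))
    (hcompat : ∀ x : C, π (G x) = F x) :
    ∃ H : C(Z, B), (∀ z : Z, π (H z) = F z) ∧ (∀ x : C, H x = G x) := by
  classical
  -- the space of compatible pairs
  let St := {p : C(Z, A) × C(C, B) // ∀ x : C, π (p.2 x) = p.1 x}
  -- one approximation step
  have step : ∀ (s : St) (k : ℕ), ∃ V : C(Z, B),
      (∀ z, ‖V z‖ ≤ max ‖s.1.1‖ ‖s.1.2‖) ∧ (∀ z, ‖π (V z) - s.1.1 z‖ ≤ (2⁻¹ : ℝ) ^ k) ∧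
      (∀ x : C, ‖V x - s.1.2 x‖ ≤ (2⁻¹ : ℝ) ^ k) := by
    intro s k
    exact approx_step C hπ s.1.1 s.1.2 s.2 (by positivity)
  choose V hV1 hV2 hV3 using step
  -- next state
  have next : ∀ (s : St) (k : ℕ),
      ∀ x : C, π ((s.1.2 - cmRestr (B := B) C (V s k)) x)
        = (s.1.1 - cmComp π (V s k)) x := by
    intro s k x
    simp only [ContinuousMap.sub_apply, cmRestr_apply, cmComp_apply, map_sub]
    rw [s.2 x]
  let seq : ℕ → St := fun k => Nat.rec ⟨(F, G), hcompat⟩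
    (fun k s => ⟨(s.1.1 - cmComp π (V s k), s.1.2 - cmRestr (B := B) C (V s k)), next s k⟩) k
  set v : ℕ → C(Z, B) := fun k => V (seq k) k with hv
  have seq_zero_fst : (seq 0).1.1 = F := rfl
  have seq_zero_snd : (seq 0).1.2 = G := rfl
  have seq_fst : ∀ k, (seq (k + 1)).1.1 = (seq k).1.1 - cmComp π (v k) := fun k => rfl
  have seq_snd : ∀ k, (seq (k + 1)).1.2 = (seq k).1.2 - cmRestr (B := B) C (v k) :=
    fun k => rfl
  -- norms of the states decay
  have hFk : ∀ k, ∀ z, ‖(seq (k + 1)).1.1 z‖ ≤ (2⁻¹ : ℝ) ^ k := by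
    intro k z
    rw [seq_fst k]
    simp only [ContinuousMap.sub_apply, cmComp_apply]
    rw [norm_sub_rev]
    exact hV2 (seq k) k z
  have hGk : ∀ k, ∀ x : C, ‖(seq (k + 1)).1.2 x‖ ≤ (2⁻¹ : ℝ) ^ k := by
    intro k x
    rw [seq_snd k]
    simp only [ContinuousMap.sub_apply, cmRestr_apply]
    rw [norm_sub_rev]
    exact hV3 (seq k) k x
  have hFkn : ∀ k, ‖(seq (k + 1)).1.1‖ ≤ (2⁻¹ : ℝ) ^ k := fun k =>
    (ContinuousMap.norm_le _ (by positivity)).mpr (hFk k)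
  have hGkn : ∀ k, ‖(seq (k + 1)).1.2‖ ≤ (2⁻¹ : ℝ) ^ k := fun k =>
    (ContinuousMap.norm_le _ (by positivity)).mpr (hGk k)
  -- norm bound on v
  set M : ℝ := max (max ‖F‖ ‖G‖) 2 with hM
  have hvnorm : ∀ k, ‖v k‖ ≤ M * (2⁻¹ : ℝ) ^ k := by
    intro k
    have hb : ‖v k‖ ≤ max ‖(seq k).1.1‖ ‖(seq k).1.2‖ :=
      (ContinuousMap.norm_le _ (le_trans (norm_nonneg _) (le_max_left _ _))).mpr (hV1 (seq k) k)
    match k with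
    | 0 =>
      rw [seq_zero_fst, seq_zero_snd] at hb
      calc ‖v 0‖ ≤ max ‖F‖ ‖G‖ := hb
        _ ≤ M := le_max_left _ _
        _ = M * (2⁻¹ : ℝ) ^ 0 := by ring
    | (k + 1) =>
      have hmx : max ‖(seq (k + 1)).1.1‖ ‖(seq (k + 1)).1.2‖ ≤ (2⁻¹ : ℝ) ^ k :=
        max_le (hFkn k) (hGkn k)
      calc ‖v (k + 1)‖ ≤ (2⁻¹ : ℝ) ^ k := hb.trans hmx
        _ = 2 * (2⁻¹ : ℝ) ^ (k + 1) := by ring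
        _ ≤ M * (2⁻¹ : ℝ) ^ (k + 1) := by
            apply mul_le_mul_of_nonneg_right (le_max_right _ _) (by positivity)
  -- summability
  have hsummable : Summable v := by
    apply Summable.of_norm_bounded (g := fun k => M * (2⁻¹ : ℝ) ^ k) _ hvnorm
    exact (summable_geometric_of_lt_one (by norm_num) (by norm_num)).mul_left M
  set H : C(Z, B) := ∑' k, v k with hH
  have hHsum : HasSum v H := hsummable.hasSum
  have htendsto : Filter.Tendsto (fun m => ∑ k ∈ Finset.range m, v k)
      Filter.atTop (nhds H) := hHsum.tendsto_sum_nat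
  -- telescoping
  have htel1 : ∀ m, cmComp π (∑ k ∈ Finset.range m, v k) = F - (seq m).1.1 := by
    intro m
    induction m with
    | zero =>
      rw [Finset.range_zero, Finset.sum_empty, map_zero, seq_zero_fst, sub_self]
    | succ m ih =>
      rw [Finset.sum_range_succ, map_add, ih, seq_fst m]
      abel
  have htel2 : ∀ m, cmRestr (B := B) C (∑ k ∈ Finset.range m, v k) = G - (seq m).1.2 := by
    intro m
    induction m with
    | zero =>
      rw [Finset.range_zero, Finset.sum_empty, map_zero, seq_zero_snd, sub_self]
    | succ m ih =>
      rw [Finset.sum_range_succ, map_add, ih, seq_snd m]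
      abel
  -- pass to the limit
  have hcont1 : Continuous (cmComp (Z := Z) π) := starHom_continuous _
  have hcont2 : Continuous (cmRestr (Z := Z) (B := B) C) := starHom_continuous _
  have hlim1 : Filter.Tendsto (fun m => (seq m).1.1) Filter.atTop (nhds 0) := by
    apply squeeze_zero_norm' (a := fun m : ℕ => (2⁻¹ : ℝ) ^ (m - 1))
    · filter_upwards [Filter.eventually_ge_atTop 1] with m hm
      obtain ⟨m, rfl⟩ := Nat.exists_eq_add_of_le hm
      rw [add_comm 1 m]
      simpa using hFkn m
    · exact Filter.Tendsto.comp (tendsto_pow_atTop_nhds_zero_of_lt_one (by norm_num)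
        (by norm_num)) (Filter.tendsto_sub_atTop_nat 1)
  have hlim2 : Filter.Tendsto (fun m => (seq m).1.2) Filter.atTop (nhds 0) := by
    apply squeeze_zero_norm' (a := fun m : ℕ => (2⁻¹ : ℝ) ^ (m - 1))
    · filter_upwards [Filter.eventually_ge_atTop 1] with m hm
      obtain ⟨m, rfl⟩ := Nat.exists_eq_add_of_le hm
      rw [add_comm 1 m]
      simpa using hGkn m
    · exact Filter.Tendsto.comp (tendsto_pow_atTop_nhds_zero_of_lt_one (by norm_num)
        (by norm_num)) (Filter.tendsto_sub_atTop_nat 1)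
  have heq1 : cmComp π H = F := by
    have t1 : Filter.Tendsto (fun m => cmComp π (∑ k ∈ Finset.range m, v k))
        Filter.atTop (nhds (cmComp π H)) := (hcont1.tendsto H).comp htendsto
    have t2 : Filter.Tendsto (fun m => cmComp π (∑ k ∈ Finset.range m, v k))
        Filter.atTop (nhds F) := by
      simp only [htel1]
      have := Filter.Tendsto.sub (tendsto_const_nhds (x := F)) hlim1
      simpa using this
    exact tendsto_nhds_unique t1 t2
  have heq2 : cmRestr (B := B) C H = G := by
    have t1 : Filter.Tendsto (fun m => cmRestr (B := B) C (∑ k ∈ Finset.range m, v k))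
        Filter.atTop (nhds (cmRestr (B := B) C H)) := (hcont2.tendsto H).comp htendsto
    have t2 : Filter.Tendsto (fun m => cmRestr (B := B) C (∑ k ∈ Finset.range m, v k))
        Filter.atTop (nhds G) := by
      simp only [htel2]
      have := Filter.Tendsto.sub (tendsto_const_nhds (x := G)) hlim2
      simpa using this
    exact tendsto_nhds_unique t1 t2
  refine ⟨H, ?_, ?_⟩
  · intro z
    have := congrArg (fun u : C(Z, A) => u z) heq1
    simpa using this
  · intro x
    have := congrArg (fun u : C(C, B) => u x) heq2
    simpa using this

end Iterate

/-- lifts of continuous functions along a surjective `*`-homomorphism can be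
extended from a closed subset of a compact metric space with control on the sup-norm. -/
theorem exists_extension_lift_of_surjective_starHom
    {Z : Type*} [MetricSpace Z] [CompactSpace Z] [Nonempty Z]
    (C : Set Z) (hC : IsClosed C)
    {A B : Type*} [NonUnitalCStarAlgebra A] [NonUnitalCStarAlgebra B]
    (π : B →⋆ₙₐ[ℂ] A) (hπ : Function.Surjective π)
    (g : C → B) (hg : Continuous g) (f : Z → A) (hf : Continuous f)
    (hcompat : ∀ x : C, π (g x) = f x) :
    ∃ h : Z → B, Continuous h ∧ (∀ x : C, h x = g x) ∧ (∀ z : Z, π (h z) = f z) ∧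
      (⨆ z : Z, ‖h z‖) = max (⨆ x : C, ‖g x‖) (⨆ z : Z, ‖f z‖) := by
  haveI : CompactSpace C := isCompact_iff_compactSpace.mp hC.isCompact
  set F : C(Z, A) := ⟨f, hf⟩ with hF
  set G : C(C, B) := ⟨g, hg⟩ with hG
  set n : ℝ := max (⨆ x : C, ‖g x‖) (⨆ z : Z, ‖f z‖) with hn
  have hbddf : BddAbove (Set.range fun z : Z => ‖f z‖) := by
    refine ⟨‖F‖, ?_⟩
    rintro r ⟨z, rfl⟩
    exact F.norm_coe_le_norm z
  have hbddg : BddAbove (Set.range fun x : C => ‖g x‖) := by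
    refine ⟨‖G‖, ?_⟩
    rintro r ⟨x, rfl⟩
    exact G.norm_coe_le_norm x
  have hfle : ∀ z : Z, ‖f z‖ ≤ n := fun z =>
    le_max_of_le_right (le_ciSup hbddf z)
  have hgle : ∀ x : C, ‖g x‖ ≤ n := fun x =>
    le_max_of_le_left (le_ciSup hbddg x)
  have hn0 : 0 ≤ n := le_trans (norm_nonneg (f (Classical.arbitrary Z)))
    (hfle (Classical.arbitrary Z))
  obtain ⟨H, hH1, hH2⟩ := exists_exact_lift C hπ F G hcompat
  rcases eq_or_lt_of_le hn0 with hn0' | hnpos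
  · -- degenerate case: everything is zero
    have hf0 : ∀ z : Z, f z = 0 := by
      intro z
      have := (hfle z).trans (le_of_eq hn0'.symm)
      exact norm_le_zero_iff.mp this
    have hg0 : ∀ x : C, g x = 0 := by
      intro x
      have := (hgle x).trans (le_of_eq hn0'.symm)
      exact norm_le_zero_iff.mp this
    refine ⟨fun _ => 0, continuous_const, fun x => (hg0 x).symm,
      fun z => by rw [map_zero, hf0 z], ?_⟩
    rw [← hn0']
    simp
  · -- main case: truncate the exact lift
    set h : C(Z, B) := myTrunc H n with hh
    have hnormh : ‖h‖ ≤ n := norm_myTrunc_le H hnpos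
    have hhf : ∀ z : Z, π (h z) = f z := by
      intro z
      have key := map_myTrunc (π.comp (cmEval z)) H hnpos (by
        simpa [NonUnitalStarAlgHom.comp_apply, hH1 z, hF] using hfle z)
      simpa [NonUnitalStarAlgHom.comp_apply, hH1 z, hF, ← hh] using key
    have hhg : ∀ x : C, h x = g x := by
      intro x
      have key := map_myTrunc (cmEval (B := B) (x : Z)) H hnpos (by
        simpa [hH2 x, hG] using hgle x)
      simpa [hH2 x, hG, ← hh] using key
    refine ⟨⇑h, h.continuous, hhg, hhf, ?_⟩
    have hbddh : BddAbove (Set.range fun z : Z => ‖h z‖) := by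
      refine ⟨‖h‖, ?_⟩
      rintro r ⟨z, rfl⟩
      exact h.norm_coe_le_norm z
    apply le_antisymm
    · exact ciSup_le fun z => (h.norm_coe_le_norm z).trans hnormh
    · apply max_le
      · rcases isEmpty_or_nonempty C with hem | hne
        · rw [Real.iSup_of_isEmpty]
          exact le_trans (norm_nonneg (h (Classical.arbitrary Z)))
            (le_ciSup hbddh (Classical.arbitrary Z))
        · apply ciSup_le
          intro x
          rw [← hhg x]
          exact le_ciSup hbddh (x : Z)
      · apply ciSup_le
        intro z
        rw [← hhf z]
        exact le_trans (NonUnitalStarAlgHom.norm_apply_le π (h z)) (le_ciSup hbddh z)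
end

section
/- Let H be a complex Hilbert space, κ an infinite cardinal, and (T_s)_{s∈S} a family of compact operators on H (continuous linear maps H → H each satisfying IsCompactOperator) indexed by a type S with #S ≤ κ. Then there exists a closed subspace H₀ of H which is the topological closure of the linear span of a set of vectors of cardinality at most κ, such that for every s ∈ S: T_s(x) ∈ H₀ for all x ∈ H, and T_s(x) = 0 for every x in the orthogonal complement of H₀. -/
universe u

open Submodule in
lemma aux_compact_range_span {H : Type u} [NormedAddCommGroup H] [InnerProductSpace ℂ H]
    (T : H →L[ℂ] H) (hT : IsCompactOperator T) :
    ∃ C : Set H, C.Countable ∧ ∀ x : H, T x ∈ (Submodule.span ℂ C).topologicalClosure := by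
  obtain ⟨K, hK, hKmem⟩ := hT
  obtain ⟨C, hCc, hKC⟩ := hK.isSeparable
  refine ⟨C, hCc, ?_⟩
  set M := (Submodule.span ℂ C).topologicalClosure with hM
  have hKM : K ⊆ (M : Set H) := by
    refine hKC.trans ?_
    have : (M : Set H) = closure ((Submodule.span ℂ C : Submodule ℂ H) : Set H) := rfl
    rw [this]
    exact closure_mono Submodule.subset_span
  intro x
  obtain ⟨ε, hε, hball⟩ := Metric.mem_nhds_iff.mp hKmem
  rcases eq_or_ne x 0 with rfl | hx
  · simp only [map_zero]; exact M.zero_mem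
  · set c : ℂ := ((ε / 2 / ‖x‖ : ℝ) : ℂ) with hc
    have hxn : (0:ℝ) < ‖x‖ := norm_pos_iff.mpr hx
    have hcpos : (0:ℝ) < ε / 2 / ‖x‖ := by positivity
    have hc0 : c ≠ 0 := by
      simp only [hc, ne_eq, Complex.ofReal_eq_zero]
      exact ne_of_gt hcpos
    have hmem : c • x ∈ T ⁻¹' K := by
      apply hball
      simp only [Metric.mem_ball, dist_zero_right, norm_smul, hc, Complex.norm_real,
        Real.norm_eq_abs, abs_of_pos hcpos]
      rw [div_mul_cancel₀ _ (ne_of_gt hxn)]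
      linarith
    have : T x = c⁻¹ • T (c • x) := by
      rw [map_smul, smul_smul, inv_mul_cancel₀ hc0, one_smul]
    rw [this]
    exact M.smul_mem _ (hKM hmem)

/-- a family of at most `κ` compact operators on a Hilbert space is supported
on (and vanishes on the orthogonal complement of) a closed subspace generated by at most `κ`
vectors. -/
theorem exists_separable_subspace_for_compact_operators
    {H : Type u} [NormedAddCommGroup H] [InnerProductSpace ℂ H] [CompleteSpace H]
    (κ : Cardinal.{u}) (hκ : Cardinal.aleph0 ≤ κ)
    {S : Type u} (hS : Cardinal.mk S ≤ κ)
    (T : S → H →L[ℂ] H) (hT : ∀ s : S, IsCompactOperator (T s)) :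
    ∃ D : Set H, Cardinal.mk D ≤ κ ∧
      ∀ s : S, (∀ x : H, T s x ∈ (Submodule.span ℂ D).topologicalClosure) ∧
        (∀ x ∈ ((Submodule.span ℂ D).topologicalClosure)ᗮ, T s x = 0) := by
  classical
  -- A s := T s† ∘ T s is a compact operator
  set A : S → H →L[ℂ] H := fun s => (ContinuousLinearMap.adjoint (T s)).comp (T s) with hA
  have hAc : ∀ s, IsCompactOperator (A s) := fun s =>
    (hT s).clm_comp (ContinuousLinearMap.adjoint (T s))
  choose C₁ hC₁c hC₁ using fun s => aux_compact_range_span (T s) (hT s)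
  choose C₂ hC₂c hC₂ using fun s => aux_compact_range_span (A s) (hAc s)
  set D : Set H := (⋃ s, C₁ s) ∪ ⋃ s, C₂ s with hD
  refine ⟨D, ?_, ?_⟩
  · -- cardinality bound
    have h1 : Cardinal.mk (⋃ s, C₁ s : Set H) ≤ κ := by
      refine (Cardinal.mk_iUnion_le _).trans ?_
      refine le_trans (mul_le_mul' hS (ciSup_le' (fun s =>
        (Cardinal.mk_le_aleph0_iff.mpr (hC₁c s).to_subtype).trans hκ : ∀ s, Cardinal.mk (C₁ s) ≤ κ))) ?_
      rw [Cardinal.mul_eq_self hκ]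
    have h2 : Cardinal.mk (⋃ s, C₂ s : Set H) ≤ κ := by
      refine (Cardinal.mk_iUnion_le _).trans ?_
      refine le_trans (mul_le_mul' hS (ciSup_le' (fun s =>
        (Cardinal.mk_le_aleph0_iff.mpr (hC₂c s).to_subtype).trans hκ : ∀ s, Cardinal.mk (C₂ s) ≤ κ))) ?_
      rw [Cardinal.mul_eq_self hκ]
    calc Cardinal.mk D ≤ _ + _ := Cardinal.mk_union_le _ _
      _ ≤ κ + κ := add_le_add h1 h2
      _ = κ := Cardinal.add_eq_self hκ
  · intro s
    have hsub1 : (Submodule.span ℂ (C₁ s)).topologicalClosure ≤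
        (Submodule.span ℂ D).topologicalClosure :=
      Submodule.topologicalClosure_mono (Submodule.span_mono
        (le_trans (Set.subset_iUnion C₁ s) Set.subset_union_left))
    have hsub2 : (Submodule.span ℂ (C₂ s)).topologicalClosure ≤
        (Submodule.span ℂ D).topologicalClosure :=
      Submodule.topologicalClosure_mono (Submodule.span_mono
        (le_trans (Set.subset_iUnion C₂ s) Set.subset_union_right))
    refine ⟨fun x => hsub1 (hC₁ s x), fun x hx => ?_⟩
    have hAx : A s x ∈ (Submodule.span ℂ D).topologicalClosure := hsub2 (hC₂ s x)
    have h0 : inner ℂ (A s x) x = (0 : ℂ) := hx _ hAx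
    have : inner ℂ (T s x) (T s x) = (0 : ℂ) := by
      rw [← ContinuousLinearMap.adjoint_inner_left]
      exact h0
    exact inner_self_eq_zero.mp this
end

section
/- Let B be a C*-algebra (with its canonical partial order), let J ⊆ B be a closed two-sided ideal, and let (u_i)_{i∈ι} and (v_i)_{i∈ι} be two quasicentral approximate units for J in B indexed by the same nonempty directed preorder ι: u_i, v_i ∈ J, 0 ≤ u_i, 0 ≤ v_i, ‖u_i‖ ≤ 1, ‖v_i‖ ≤ 1, ‖u_i·j − j‖ → 0 and ‖v_i·j − j‖ → 0 for every j ∈ J, and ‖u_i·b − b·u_i‖ → 0 and ‖v_i·b − b·v_i‖ → 0 for every b ∈ B (limits along atTop). For each i define w_i ∈ C([0,1],B) by w_i(t) = (1−t)·u_i + t·v_i. Then: (i) for every i and t, w_i(t) ∈ J and 0 ≤ w_i(t), and ‖w_i‖ ≤ 1; (ii) for every j ∈ C([0,1],B) with j(t) ∈ J for all t, ‖w_i·j − j‖ → 0 in C([0,1],B) along atTop; (iii) for every f ∈ C([0,1],B) with f(s) − f(t) ∈ J for all s, t ∈ [0,1], ‖w_i·f − f·w_i‖ → 0 in C([0,1],B)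 along atTop. -/
/-- the affine segment between two quasicentral approximate units for an ideal
`J ⊆ B`, indexed by the same directed set, is a quasicentral approximate unit for
`C([0,1];J)` in the algebra of continuous paths in `B` which are constant modulo `J`. -/
theorem affine_segment_of_quasicentral_approximate_units
    {B : Type*} [NonUnitalCStarAlgebra B] [PartialOrder B] [StarOrderedRing B]
    (J : TwoSidedIdeal B) (hJclosed : IsClosed (J : Set B))
    {ι : Type*} [Preorder ι] [IsDirected ι (· ≤ ·)] [Nonempty ι]
    (u v : ι → B)
    (humem : ∀ i, u i ∈ J) (hvmem : ∀ i, v i ∈ J)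
    (hupos : ∀ i, 0 ≤ u i) (hvpos : ∀ i, 0 ≤ v i)
    (hunorm : ∀ i, ‖u i‖ ≤ 1) (hvnorm : ∀ i, ‖v i‖ ≤ 1)
    (huapprox : ∀ j ∈ J, Filter.Tendsto (fun i => ‖u i * j - j‖) Filter.atTop (nhds 0))
    (hvapprox : ∀ j ∈ J, Filter.Tendsto (fun i => ‖v i * j - j‖) Filter.atTop (nhds 0))
    (hucomm : ∀ b : B, Filter.Tendsto (fun i => ‖u i * b - b * u i‖) Filter.atTop (nhds 0))
    (hvcomm : ∀ b : B, Filter.Tendsto (fun i => ‖v i * b - b * v i‖) Filter.atTop (nhds 0))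
    (w : ι → C(unitInterval, B))
    (hw : ∀ (i : ι) (t : unitInterval), w i t = (1 - (t : ℝ)) • u i + (t : ℝ) • v i) :
    (∀ (i : ι) (t : unitInterval), w i t ∈ J ∧ 0 ≤ w i t) ∧
    (∀ i : ι, ‖w i‖ ≤ 1) ∧
    (∀ j : C(unitInterval, B), (∀ t : unitInterval, j t ∈ J) →
      Filter.Tendsto (fun i => ‖w i * j - j‖) Filter.atTop (nhds 0)) ∧
    (∀ f : C(unitInterval, B), (∀ s t : unitInterval, f s - f t ∈ J) →
      Filter.Tendsto (fun i => ‖w i * f - f * w i‖) Filter.atTop (nhds 0)) := by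
  have hneBot : (Filter.atTop : Filter ι).NeBot :=
    Filter.atTop_neBot_iff.mpr ⟨‹_›, ‹_›⟩
  -- real smul stays in the (closed) ideal
  have smulJ : ∀ (r : ℝ) (x : B), x ∈ J → r • x ∈ J := by
    intro r x hx
    have h1 : Filter.Tendsto (fun i => u i * x) Filter.atTop (nhds x) := by
      rw [tendsto_iff_norm_sub_tendsto_zero]
      exact huapprox x hx
    have h2 : Filter.Tendsto (fun i => r • (u i * x)) Filter.atTop (nhds (r • x)) :=
      h1.const_smul r
    refine hJclosed.mem_of_tendsto h2 (Filter.Eventually.of_forall fun i => ?_)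
    have : r • (u i * x) = (r • u i) * x := (smul_mul_assoc r (u i) x).symm
    rw [this]
    exact J.mul_mem_left _ _ hx
  -- basic facts about t ∈ [0,1]
  have ht0 : ∀ t : unitInterval, (0:ℝ) ≤ (t : ℝ) := fun t => t.2.1
  have ht1 : ∀ t : unitInterval, (t : ℝ) ≤ 1 := fun t => t.2.2
  -- pointwise norm bound on w
  have hwt_norm : ∀ (i : ι) (t : unitInterval), ‖w i t‖ ≤ 1 := by
    intro i t
    rw [hw]
    calc ‖(1 - (t : ℝ)) • u i + (t : ℝ) • v i‖
        ≤ ‖(1 - (t : ℝ)) • u i‖ + ‖(t : ℝ) • v i‖ := norm_add_le _ _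
      _ = (1 - (t : ℝ)) * ‖u i‖ + (t : ℝ) * ‖v i‖ := by
          rw [norm_smul, norm_smul, Real.norm_of_nonneg (by linarith [ht1 t]),
            Real.norm_of_nonneg (ht0 t)]
      _ ≤ (1 - (t : ℝ)) * 1 + (t : ℝ) * 1 := by
          gcongr
          · linarith [ht1 t]
          · exact hunorm i
          · exact ht0 t
          · exact hvnorm i
      _ = 1 := by ring
  -- the key algebraic identities
  have key_mul : ∀ (i : ι) (t : unitInterval) (a : B),
      w i t * a - a = (1 - (t : ℝ)) • (u i * a - a) + (t : ℝ) • (v i * a - a) := by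
    intro i t a
    rw [hw]
    simp only [add_mul, smul_mul_assoc, smul_sub]
    module
  have key_comm : ∀ (i : ι) (t : unitInterval) (b : B),
      w i t * b - b * w i t
        = (1 - (t : ℝ)) • (u i * b - b * u i) + (t : ℝ) • (v i * b - b * v i) := by
    intro i t b
    rw [hw]
    simp only [add_mul, mul_add, smul_mul_assoc, mul_smul_comm, smul_sub]
    module
  -- norm consequences of the key identities
  have key_mul_norm : ∀ (i : ι) (t : unitInterval) (a : B) {ε : ℝ},
      ‖u i * a - a‖ ≤ ε → ‖v i * a - a‖ ≤ ε → ‖w i t * a - a‖ ≤ ε := by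
    intro i t a ε h1 h2
    have hε : 0 ≤ ε := le_trans (norm_nonneg _) h1
    calc ‖w i t * a - a‖
        = ‖(1 - (t : ℝ)) • (u i * a - a) + (t : ℝ) • (v i * a - a)‖ := by rw [key_mul]
      _ ≤ ‖(1 - (t : ℝ)) • (u i * a - a)‖ + ‖(t : ℝ) • (v i * a - a)‖ := norm_add_le _ _
      _ = (1 - (t : ℝ)) * ‖u i * a - a‖ + (t : ℝ) * ‖v i * a - a‖ := by
          rw [norm_smul, norm_smul, Real.norm_of_nonneg (by linarith [ht1 t]),
            Real.norm_of_nonneg (ht0 t)]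
      _ ≤ (1 - (t : ℝ)) * ε + (t : ℝ) * ε := by
          gcongr
          · linarith [ht1 t]
          · exact ht0 t
      _ = ε := by ring
  have key_comm_norm : ∀ (i : ι) (t : unitInterval) (b : B) {ε : ℝ},
      ‖u i * b - b * u i‖ ≤ ε → ‖v i * b - b * v i‖ ≤ ε →
        ‖w i t * b - b * w i t‖ ≤ ε := by
    intro i t b ε h1 h2
    have hε : 0 ≤ ε := le_trans (norm_nonneg _) h1
    calc ‖w i t * b - b * w i t‖
        = ‖(1 - (t : ℝ)) • (u i * b - b * u i) + (t : ℝ) • (v i * b - b * v i)‖ := by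
          rw [key_comm]
      _ ≤ ‖(1 - (t : ℝ)) • (u i * b - b * u i)‖ + ‖(t : ℝ) • (v i * b - b * v i)‖ :=
          norm_add_le _ _
      _ = (1 - (t : ℝ)) * ‖u i * b - b * u i‖ + (t : ℝ) * ‖v i * b - b * v i‖ := by
          rw [norm_smul, norm_smul, Real.norm_of_nonneg (by linarith [ht1 t]),
            Real.norm_of_nonneg (ht0 t)]
      _ ≤ (1 - (t : ℝ)) * ε + (t : ℝ) * ε := by
          gcongr
          · linarith [ht1 t]
          · exact ht0 t
      _ = ε := by ring
  refine ⟨?_, ?_, ?_, ?_⟩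
  · -- membership and positivity
    intro i t
    constructor
    · rw [hw]
      exact J.add_mem (smulJ _ _ (humem i)) (smulJ _ _ (hvmem i))
    · rw [hw]
      exact add_nonneg (smul_nonneg (by linarith [ht1 t]) (hupos i))
        (smul_nonneg (ht0 t) (hvpos i))
  · -- norm bound
    intro i
    exact (ContinuousMap.norm_le _ zero_le_one).mpr (hwt_norm i)
  · -- approximate unit property
    intro j hj
    rw [Metric.tendsto_nhds]
    intro ε hε
    -- finite ε/4-net in the range of j, with centers in J
    obtain ⟨F, hFsub, hFfin, hFcov⟩ :=
      Metric.finite_approx_of_totallyBounded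
        ((isCompact_range j.continuous).totallyBounded) (ε/4) (by linarith)
    have hFJ : ∀ x ∈ F, x ∈ J := by
      intro x hx
      obtain ⟨s, rfl⟩ := hFsub hx
      exact hj s
    have hev : ∀ᶠ i in Filter.atTop,
        ∀ x ∈ F, ‖u i * x - x‖ < ε/4 ∧ ‖v i * x - x‖ < ε/4 := by
      rw [Set.Finite.eventually_all hFfin]
      intro x hx
      exact ((huapprox x (hFJ x hx)).eventually_lt_const (by linarith)).and
        ((hvapprox x (hFJ x hx)).eventually_lt_const (by linarith))
    filter_upwards [hev] with i hi
    have hle : ‖w i * j - j‖ ≤ 3 * (ε/4) := by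
      refine (ContinuousMap.norm_le _ (by linarith)).mpr fun t => ?_
      have : (w i * j - j) t = w i t * j t - j t := rfl
      rw [this]
      obtain ⟨x, hxF, hxball⟩ : ∃ x ∈ F, j t ∈ Metric.ball x (ε/4) := by
        simpa using hFcov ⟨t, rfl⟩
      have hdist : ‖j t - x‖ < ε/4 := by
        rw [← dist_eq_norm]; exact Metric.mem_ball.mp hxball
      have hsplit : w i t * j t - j t
          = w i t * (j t - x) + (w i t * x - x) + (x - j t) := by
        simp only [mul_sub]; abel
      rw [hsplit]
      have h1 : ‖w i t * (j t - x)‖ ≤ ε/4 := by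
        calc ‖w i t * (j t - x)‖ ≤ ‖w i t‖ * ‖j t - x‖ := norm_mul_le _ _
          _ ≤ 1 * (ε/4) :=
              mul_le_mul (hwt_norm i t) hdist.le (norm_nonneg _) zero_le_one
          _ = ε/4 := one_mul _
      have h2 : ‖w i t * x - x‖ ≤ ε/4 :=
        key_mul_norm i t x (hi x hxF).1.le (hi x hxF).2.le
      have h3 : ‖x - j t‖ ≤ ε/4 := by rw [norm_sub_rev]; exact hdist.le
      calc ‖w i t * (j t - x) + (w i t * x - x) + (x - j t)‖
          ≤ ‖w i t * (j t - x) + (w i t * x - x)‖ + ‖x - j t‖ := norm_add_le _ _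
        _ ≤ ‖w i t * (j t - x)‖ + ‖w i t * x - x‖ + ‖x - j t‖ := by
            gcongr; exact norm_add_le _ _
        _ ≤ ε/4 + ε/4 + ε/4 := by gcongr
        _ = 3 * (ε/4) := by ring
    rw [Real.dist_eq, sub_zero, abs_of_nonneg (norm_nonneg _)]
    calc ‖w i * j - j‖ ≤ 3 * (ε/4) := hle
      _ < ε := by linarith
  · -- quasicentrality
    intro f _hf
    rw [Metric.tendsto_nhds]
    intro ε hε
    obtain ⟨F, hFsub, hFfin, hFcov⟩ :=
      Metric.finite_approx_of_totallyBounded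
        ((isCompact_range f.continuous).totallyBounded) (ε/4) (by linarith)
    have hev : ∀ᶠ i in Filter.atTop,
        ∀ x ∈ F, ‖u i * x - x * u i‖ < ε/4 ∧ ‖v i * x - x * v i‖ < ε/4 := by
      rw [Set.Finite.eventually_all hFfin]
      intro x _hx
      exact ((hucomm x).eventually_lt_const (by linarith)).and
        ((hvcomm x).eventually_lt_const (by linarith))
    filter_upwards [hev] with i hi
    have hle : ‖w i * f - f * w i‖ ≤ 3 * (ε/4) := by
      refine (ContinuousMap.norm_le _ (by linarith)).mpr fun t => ?_
      have : (w i * f - f * w i) t = w i t * f t - f t * w i t := rfl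
      rw [this]
      obtain ⟨x, hxF, hxball⟩ : ∃ x ∈ F, f t ∈ Metric.ball x (ε/4) := by
        simpa using hFcov ⟨t, rfl⟩
      have hdist : ‖f t - x‖ < ε/4 := by
        rw [← dist_eq_norm]; exact Metric.mem_ball.mp hxball
      have hsplit : w i t * f t - f t * w i t
          = (w i t * (f t - x) - (f t - x) * w i t) + (w i t * x - x * w i t) := by
        simp only [mul_sub, sub_mul]; abel
      rw [hsplit]
      have h1 : ‖w i t * (f t - x) - (f t - x) * w i t‖ ≤ ε/4 + ε/4 := by
        calc ‖w i t * (f t - x) - (f t - x) * w i t‖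
            ≤ ‖w i t * (f t - x)‖ + ‖(f t - x) * w i t‖ := norm_sub_le _ _
          _ ≤ ‖w i t‖ * ‖f t - x‖ + ‖f t - x‖ * ‖w i t‖ := by
              gcongr
              · exact norm_mul_le _ _
              · exact norm_mul_le _ _
          _ ≤ 1 * (ε/4) + (ε/4) * 1 :=
              add_le_add
                (mul_le_mul (hwt_norm i t) hdist.le (norm_nonneg _) zero_le_one)
                (mul_le_mul hdist.le (hwt_norm i t) (norm_nonneg _) (by linarith))
          _ = ε/4 + ε/4 := by ring
      have h2 : ‖w i t * x - x * w i t‖ ≤ ε/4 :=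
        key_comm_norm i t x (hi x hxF).1.le (hi x hxF).2.le
      calc ‖(w i t * (f t - x) - (f t - x) * w i t) + (w i t * x - x * w i t)‖
          ≤ ‖w i t * (f t - x) - (f t - x) * w i t‖ + ‖w i t * x - x * w i t‖ :=
            norm_add_le _ _
        _ ≤ (ε/4 + ε/4) + ε/4 := by gcongr
        _ = 3 * (ε/4) := by ring
    rw [Real.dist_eq, sub_zero, abs_of_nonneg (norm_nonneg _)]
    calc ‖w i * f - f * w i‖ ≤ 3 * (ε/4) := hle
      _ < ε := by linarith
end

section
/- Every infinite-dimensional complex Hilbert space H admits a linear isometric isomorphism H ≃ₗᵢ[ℂ] ℓ²(ℕ;H), where ℓ²(ℕ;H) denotes the Hilbert space lp (fun _ : ℕ => H) 2 of square-summable H-valued sequences. -/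
open scoped ENNReal

section Aux

variable {α : Type*} [DecidableEq α] {X : Type*} [NormedAddCommGroup X]

lemma lp_single_apply_const (p : ℝ≥0∞) (i j : α) (a : X) :
    (lp.single (E := fun _ : α => X) p i a) j = if j = i then a else 0 := by
  rw [lp.single_apply]
  split_ifs with h
  · subst h; rw [Pi.single_eq_same]
  · rw [Pi.single_eq_of_ne h]

variable [InnerProductSpace ℂ X]

/-- `lp.single` as a linear isometry, for a constant family. -/
noncomputable def lpSingleLi (n : α) : X →ₗᵢ[ℂ] lp (fun _ : α => X) 2 where
  toFun x := lp.single 2 n x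
  map_add' x y := by
    apply lp.ext
    funext j
    simp only [lp.coeFn_add, Pi.add_apply, lp_single_apply_const]
    split_ifs <;> simp
  map_smul' c x := by
    set_option linter.unnecessarySimpa false in
    simpa using (lp.single_smul (E := fun _ : α => X) 2 n x c).symm
  norm_map' x := by
    simpa using lp.norm_single (E := fun _ : α => X) (p := 2) (by norm_num) (fun _ => x) n

lemma lpSingleLi_apply (n : α) (x : X) :
    lpSingleLi (X := X) n x = lp.single 2 n x := rfl

end Aux

/-- every infinite-dimensional complex Hilbert space `H` is isometrically
isomorphic to `ℓ²(ℕ; H)`. -/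
theorem nonempty_linearIsometryEquiv_lp_nat_self
    {H : Type*} [NormedAddCommGroup H] [InnerProductSpace ℂ H] [CompleteSpace H]
    (hinf : ¬ FiniteDimensional ℂ H) :
    Nonempty (H ≃ₗᵢ[ℂ] lp (fun _ : ℕ => H) 2) := by
  classical
  obtain ⟨w, b, hb⟩ := exists_hilbertBasis ℂ H
  -- `w` is infinite
  haveI : Infinite w := by
    rw [Set.infinite_coe_iff]
    intro hw
    apply hinf
    have hd : (Submodule.span ℂ (Set.range b)).topologicalClosure = ⊤ := b.dense_span
    rw [hb, Subtype.range_coe] at hd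
    haveI : FiniteDimensional ℂ (Submodule.span ℂ w : Submodule ℂ H) :=
      FiniteDimensional.span_of_finite ℂ hw
    have hc : IsClosed (Submodule.span ℂ w : Set H) :=
      Submodule.closed_of_finiteDimensional _
    have htop : Submodule.span ℂ w = ⊤ := by
      rw [← hd, hc.submodule_topologicalClosure_eq]
    have : FiniteDimensional ℂ (⊤ : Submodule ℂ H) := htop ▸ inferInstance
    exact Submodule.topEquiv.finiteDimensional
  -- an equiv `w ≃ ℕ × w`
  obtain ⟨e⟩ : Nonempty (w ≃ ℕ × w) := by
    rw [← Cardinal.eq]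
    have : Cardinal.mk (ℕ × w) = Cardinal.mk w := by
      simp [Cardinal.mk_prod, Cardinal.aleph0_mul_mk_eq]
    exact this.symm
  -- orthonormality of the coercion
  have honH : Orthonormal ℂ ((↑) : w → H) := hb ▸ b.orthonormal
  rw [orthonormal_iff_ite] at honH
  -- the candidate Hilbert basis of `lp (fun _ : ℕ => H) 2`
  set v : w → lp (fun _ : ℕ => H) 2 :=
    fun i => lp.single 2 (e i).1 ((e i).2 : H) with hv_def
  have hv : Orthonormal ℂ v := by
    rw [orthonormal_iff_ite]
    intro i j
    rw [hv_def]
    simp only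
    rw [lp.inner_single_left, lp_single_apply_const]
    rcases eq_or_ne (e i).1 (e j).1 with h1 | h1
    · rw [if_pos h1, honH]
      rcases eq_or_ne i j with h | h
      · simp [h]
      · have : (e i).2 ≠ (e j).2 := by
          intro h2
          exact h (e.injective (Prod.ext h1 h2))
        simp [this, h]
    · have : i ≠ j := fun h => h1 (by rw [h])
      rw [if_neg h1, inner_zero_right, if_neg this]
  -- density of the span
  have hsp : ⊤ ≤ (Submodule.span ℂ (Set.range v)).topologicalClosure := by
    set K := (Submodule.span ℂ (Set.range v)).topologicalClosure with hK
    have hKc : IsClosed (K : Set (lp (fun _ : ℕ => H) 2)) :=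
      Submodule.isClosed_topologicalClosure _
    -- every `lp.single 2 n x` lies in `K`
    have h1 : ∀ (n : ℕ) (x : H), lp.single 2 n x ∈ K := by
      intro n x
      set S : Submodule ℂ H := K.comap (lpSingleLi (X := H) n).toLinearMap with hS
      have hSc : IsClosed (S : Set H) :=
        hKc.preimage (lpSingleLi (X := H) n).continuous
      have hwS : w ⊆ S := by
        rintro y hy
        have : v (e.symm (n, ⟨y, hy⟩)) ∈ Submodule.span ℂ (Set.range v) :=
          Submodule.subset_span ⟨_, rfl⟩
        have hmem : v (e.symm (n, ⟨y, hy⟩)) ∈ K :=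
          Submodule.le_topologicalClosure _ this
        rw [hv_def] at hmem
        simp only [Equiv.apply_symm_apply] at hmem
        exact hmem
      have hd : closure (Submodule.span ℂ w : Set H) = Set.univ := by
        have hds := b.dense_span
        rw [hb, Subtype.range_coe] at hds
        rw [← Submodule.topologicalClosure_coe, hds, Submodule.top_coe]
      have hsub : Submodule.span ℂ w ≤ S := Submodule.span_le.mpr hwS
      have : (S : Set H) = Set.univ := by
        apply Set.eq_univ_of_univ_subset
        calc Set.univ = closure (Submodule.span ℂ w : Set H) := hd.symm
          _ ⊆ closure (S : Set H) := closure_mono hsub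
          _ = S := hSc.closure_eq
      have hx : x ∈ S := by rw [← SetLike.mem_coe, this]; trivial
      exact hx
    intro f _
    have hf : HasSum (fun n : ℕ => lp.single 2 n (f n)) f :=
      lp.hasSum_single (by norm_num) f
    refine hKc.mem_of_tendsto hf ?_
    exact Filter.Eventually.of_forall fun s =>
      Submodule.sum_mem _ fun n _ => h1 n (f n)
  exact ⟨b.repr.trans (HilbertBasis.mk hv hsp).repr.symm⟩
end
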